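/- arXiv:math/0011063 — 5 statements merged into one kernel-verified Lean document; each statement's English description precedes it below -/
import Mathlib

section
/- Let (A,L_A) be a compact quantum metric space and let K₁ and K₂ be compact convex subsets of S(A), with associated quotient compact quantum metric spaces (B₁,L₁) and (B₂,L₂). Then dist_q(B₁,B₂) ≤ dist_H^{ρ_{L_A}}(K₁,K₂), the Hausdorff distance between K₁ and K₂ for the metric ρ_{L_A}. -/
open scoped ENNReal

/-- An order-unit space in the sense of Kadison: a partially ordered real vector
space with a positive order unit `e` satisfying the order-unit property and the
Archimedean property. -/
structure OrderUnitSpace : Type 1 where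
  carrier : Type
  [toAddCommGroup : AddCommGroup carrier]
  [toModule : Module ℝ carrier]
  [toPartialOrder : PartialOrder carrier]
  add_le_add_left' : ∀ a b : carrier, a ≤ b → ∀ c : carrier, c + a ≤ c + b
  smul_nonneg' : ∀ (r : ℝ) (a : carrier), 0 ≤ r → 0 ≤ a → 0 ≤ r • a
  e : carrier
  e_nonneg : 0 ≤ e
  orderUnit : ∀ a : carrier, ∃ r : ℝ, a ≤ r • e
  arch : ∀ a : carrier, (∀ r : ℝ, 0 < r → a ≤ r • e) → a ≤ 0

attribute [instance] OrderUnitSpace.toAddCommGroup OrderUnitSpace.toModule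
  OrderUnitSpace.toPartialOrder

/-- The topology generated by the open balls of a distance function. -/
def ballTopology {S : Type*} (ρ : S → S → ℝ≥0∞) : TopologicalSpace S :=
  TopologicalSpace.generateFrom
    {U : Set S | ∃ (μ : S) (ε : ℝ≥0∞), 0 < ε ∧ U = {ν | ρ μ ν < ε}}

/-- The quotient seminorm of `L` along the surjection `π`. -/
noncomputable def quotientSeminorm {α β : Type*} (π : α → β) (L : α → ℝ) (b : β) : ℝ :=
  sInf {r : ℝ | ∃ a, π a = b ∧ L a = r}

/-- `L` induces `LB` via `π`, i.e. `LB` is the quotient seminorm of `L` for `π`. -/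
def Induces {α β : Type*} (π : α → β) (L : α → ℝ) (LB : β → ℝ) : Prop :=
  ∀ b, LB b = quotientSeminorm π L b

/-- Hausdorff distance between two subsets with respect to a distance function. -/
noncomputable def hausdorffDistWith {S : Type*} (ρ : S → S → ℝ≥0∞) (T U : Set S) : ℝ≥0∞ :=
  max (⨆ t ∈ T, ⨅ u ∈ U, ρ t u) (⨆ u ∈ U, ⨅ t ∈ T, ρ t u)

namespace OrderUnitSpace

variable (A B : OrderUnitSpace)

theorem le_of_sub_nonneg'' {x y : A.carrier} (h : 0 ≤ y - x) : x ≤ y := by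
  have h2 := A.add_le_add_left' 0 (y - x) h x
  have h3 : x + (y - x) = y := by abel
  rw [add_zero, h3] at h2
  exact h2

theorem smul_e_mono {r s : ℝ} (h : r ≤ s) : r • A.e ≤ s • A.e := by
  apply A.le_of_sub_nonneg''
  have h3 : s • A.e - r • A.e = (s - r) • A.e := by rw [sub_smul]
  rw [h3]
  exact A.smul_nonneg' _ _ (by linarith) A.e_nonneg

/-- The order-unit norm. -/
noncomputable def onorm (a : A.carrier) : ℝ :=
  sInf {r : ℝ | -(r • A.e) ≤ a ∧ a ≤ r • A.e}

/-- A state: a unital positive linear functional. -/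
def IsState (μ : A.carrier →ₗ[ℝ] ℝ) : Prop :=
  μ A.e = 1 ∧ ∀ a : A.carrier, 0 ≤ a → 0 ≤ μ a

/-- The state space. -/
def State : Type := {μ : A.carrier →ₗ[ℝ] ℝ // A.IsState μ}

/-- The weak-* topology on the state space. -/
instance : TopologicalSpace A.State :=
  TopologicalSpace.induced (fun μ : A.State => (μ.1 : A.carrier → ℝ)) Pi.topologicalSpace

/-- The metric `ρ_L` on the state space defined by a seminorm `L`. -/
noncomputable def rho (L : Seminorm ℝ A.carrier) (μ ν : A.State) : ℝ≥0∞ :=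
  ⨆ a : {a : A.carrier // L a ≤ 1}, ENNReal.ofReal |μ.1 a.1 - ν.1 a.1|

/-- A Lipschitz seminorm: its null space is exactly `ℝ e`. -/
def IsLipschitz (L : Seminorm ℝ A.carrier) : Prop :=
  ∀ a : A.carrier, L a = 0 ↔ ∃ t : ℝ, a = t • A.e

/-- A Lip-norm: a Lipschitz seminorm whose metric `ρ_L` induces the weak-* topology. -/
def IsLipNorm (L : Seminorm ℝ A.carrier) : Prop :=
  A.IsLipschitz L ∧ ballTopology (A.rho L) = (inferInstance : TopologicalSpace A.State)

/-- The diameter of the state space for `ρ_L`. -/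
noncomputable def diam (L : Seminorm ℝ A.carrier) : ℝ≥0∞ :=
  ⨆ (μ : A.State) (ν : A.State), A.rho L μ ν

/-- The radius: half the diameter. -/
noncomputable def radius (L : Seminorm ℝ A.carrier) : ℝ≥0∞ := A.diam L / 2

/-- Morphism of order-unit spaces: a unital positive linear map. -/
def IsMorphism (f : A.carrier →ₗ[ℝ] B.carrier) : Prop :=
  f A.e = B.e ∧ ∀ a : A.carrier, 0 ≤ a → 0 ≤ f a

/-- Pull back a state along a morphism; this is `S(π)`. -/
noncomputable def pullState (f : A.carrier →ₗ[ℝ] B.carrier) (hf : A.IsMorphism B f)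
    (μ : B.State) : A.State :=
  ⟨(μ.1).comp f, by
    constructor
    · rw [LinearMap.comp_apply, hf.1]; exact μ.2.1
    · intro a ha; exact μ.2.2 _ (hf.2 a ha)⟩

/-- The direct sum `A ⊕ B` as an order-unit space. -/
@[reducible] def prod : OrderUnitSpace where
  carrier := A.carrier × B.carrier
  add_le_add_left' := by
    intro a b hab c
    rw [Prod.le_def] at hab ⊢
    exact ⟨A.add_le_add_left' _ _ hab.1 _, B.add_le_add_left' _ _ hab.2 _⟩
  smul_nonneg' := by
    intro r a hr ha
    rw [Prod.le_def] at ha ⊢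
    exact ⟨A.smul_nonneg' r a.1 hr ha.1, B.smul_nonneg' r a.2 hr ha.2⟩
  e := (A.e, B.e)
  e_nonneg := by
    rw [Prod.le_def]
    exact ⟨A.e_nonneg, B.e_nonneg⟩
  orderUnit := by
    intro a
    obtain ⟨r₁, h1⟩ := A.orderUnit a.1
    obtain ⟨r₂, h2⟩ := B.orderUnit a.2
    refine ⟨max r₁ r₂, ?_⟩
    rw [Prod.le_def]
    exact ⟨le_trans h1 (A.smul_e_mono (le_max_left _ _)),
      le_trans h2 (B.smul_e_mono (le_max_right _ _))⟩
  arch := by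
    intro a h
    rw [Prod.le_def]
    exact ⟨A.arch a.1 fun r hr => ((Prod.le_def.mp (h r hr)).1),
      B.arch a.2 fun r hr => ((Prod.le_def.mp (h r hr)).2)⟩

/-- The embedding of `S(A)` into `S(A ⊕ B)` dual to the first coordinate projection. -/
noncomputable def leftState (μ : A.State) : (A.prod B).State :=
  ⟨(μ.1).comp (LinearMap.fst ℝ A.carrier B.carrier), by
    constructor
    · exact μ.2.1
    · intro p hp; exact μ.2.2 p.1 hp.1⟩

/-- The embedding of `S(B)` into `S(A ⊕ B)` dual to the second coordinate projection. -/
noncomputable def rightState (ν : B.State) : (A.prod B).State :=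
  ⟨(ν.1).comp (LinearMap.snd ℝ A.carrier B.carrier), by
    constructor
    · exact ν.2.1
    · intro p hp; exact ν.2.2 p.2 hp.2⟩

/-- The set `M(L_A, L_B)` of Lip-norms on `A ⊕ B` inducing `L_A` and `L_B`
via the coordinate projections. -/
def admissible (LA : Seminorm ℝ A.carrier) (LB : Seminorm ℝ B.carrier) :
    Set (Seminorm ℝ (A.prod B).carrier) :=
  {L | (A.prod B).IsLipNorm L ∧
    Induces (Prod.fst : A.carrier × B.carrier → A.carrier) (fun p => L p) (fun a => LA a) ∧
    Induces (Prod.snd : A.carrier × B.carrier → B.carrier) (fun p => L p) (fun b => LB b)}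

/-- Quantum Gromov–Hausdorff distance. -/
noncomputable def distq (LA : Seminorm ℝ A.carrier) (LB : Seminorm ℝ B.carrier) : ℝ≥0∞ :=
  ⨅ L ∈ A.admissible B LA LB,
    hausdorffDistWith ((A.prod B).rho L) (Set.range (A.leftState B)) (Set.range (A.rightState B))

end OrderUnitSpace

/-- A set of states is convex if it is closed under convex combinations
(formed at the level of the underlying linear functionals). -/
def StateConvex (A : OrderUnitSpace) (K : Set A.State) : Prop :=
  ∀ μ ∈ K, ∀ ν ∈ K, ∀ t : ℝ, 0 ≤ t → t ≤ 1 → ∀ σ : A.State,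
    (σ.1 : A.carrier →ₗ[ℝ] ℝ) = t • μ.1 + (1 - t) • ν.1 → σ ∈ K

/-!
Fix `δ` above the Hausdorff distance and let `R` relate the states `f` of `B₁` and `g` of `B₂`
whose pullbacks to `S(A)` are `ρ_{L_A}`-closer than `δ`, so that every state on either side has a
partner. Rieffel's bridge `L(b, c) = max (L₁ b, L₂ c, δ⁻¹ sup_{(f, g) ∈ R} |f b - g c|)` on
`B₁ ⊕ B₂` puts every pair of `R` within `δ`, and it induces `L₁` and `L₂`: lifting `b` to `a` with
`L_A a ≈ L₁ b`, the element `(b, π₂ a)` has `L`-value at most `L_A a`. It is a Lip-norm because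
`(t, f, g) ↦ t f + (1 - t) g` maps the compact space `[0, 1] × S(B₁) × S(B₂)` continuously onto
`(S(B₁ ⊕ B₂), ρ_L)`, and a compact topology finer than the Hausdorff weak-* topology equals it.
-/

open Set Filter Topology

theorem TopologicalSpace.le_of_compactSpace_of_t2Space {X : Type*} {t₁ t₂ : TopologicalSpace X}
    (hc : @CompactSpace X t₁) (h2 : @T2Space X t₂) (h : t₁ ≤ t₂) : t₂ ≤ t₁ := by
  rw [← continuous_id_iff_le]
  refine (@continuous_iff_isClosed X X t₂ t₁ id).2 fun s hs => ?_
  simpa using @Continuous.isClosedMap X X t₁ t₂ hc h2 id (continuous_id_iff_le.2 h) s hs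

theorem isOpen_ballTopology_ball {S : Type*} (ρ : S → S → ℝ≥0∞) (μ : S) {ε : ℝ≥0∞} (hε : 0 < ε) :
    IsOpen[ballTopology ρ] {ν | ρ μ ν < ε} :=
  TopologicalSpace.isOpen_generateFrom_of_mem ⟨μ, ε, hε, rfl⟩

theorem continuous_ballTopology {X S : Type*} [TopologicalSpace X] {ρ : S → S → ℝ≥0∞}
    (htri : ∀ x y z, ρ x z ≤ ρ x y + ρ y z) {Φ : X → S}
    (h : ∀ p, Tendsto (fun q => ρ (Φ p) (Φ q)) (𝓝 p) (𝓝 0)) : Continuous[_, ballTopology ρ] Φ := by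
  refine continuous_generateFrom_iff.2 ?_
  rintro _ ⟨σ, ε, -, rfl⟩
  refine isOpen_iff_mem_nhds.2 fun p (hp : ρ σ (Φ p) < ε) => ?_
  filter_upwards [(h p).eventually (gt_mem_nhds (tsub_pos_of_lt hp))] with q hq
  exact (htri _ _ _).trans_lt (lt_tsub_iff_left.1 hq)

theorem hausdorffDistWith_le {S : Type*} {ρ : S → S → ℝ≥0∞} {T U : Set S} {c : ℝ≥0∞}
    (hT : ∀ t ∈ T, ∃ u ∈ U, ρ t u ≤ c) (hU : ∀ u ∈ U, ∃ t ∈ T, ρ t u ≤ c) :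
    hausdorffDistWith ρ T U ≤ c :=
  max_le (iSup₂_le fun t ht => let ⟨u, hu, h⟩ := hT t ht; (iInf₂_le u hu).trans h)
    (iSup₂_le fun u hu => let ⟨t, ht, h⟩ := hU u hu; (iInf₂_le t ht).trans h)

theorem exists_lt_of_hausdorffDistWith_lt_left {S : Type*} {ρ : S → S → ℝ≥0∞} {T U : Set S}
    {c : ℝ≥0∞} (h : hausdorffDistWith ρ T U < c) {t : S} (ht : t ∈ T) : ∃ u ∈ U, ρ t u < c := by
  simpa [iInf_lt_iff] using
    (le_biSup (fun t => ⨅ u ∈ U, ρ t u) ht).trans_lt ((le_max_left _ _).trans_lt h)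

theorem exists_lt_of_hausdorffDistWith_lt_right {S : Type*} {ρ : S → S → ℝ≥0∞} {T U : Set S}
    {c : ℝ≥0∞} (h : hausdorffDistWith ρ T U < c) {u : S} (hu : u ∈ U) : ∃ t ∈ T, ρ t u < c := by
  simpa [iInf_lt_iff] using
    (le_biSup (fun u => ⨅ t ∈ T, ρ t u) hu).trans_lt ((le_max_right _ _).trans_lt h)

theorem le_of_induces {α β : Type*} {π : α → β} {LA : α → ℝ} {LB : β → ℝ}
    (h : Induces π LA LB) (hLA : ∀ a, 0 ≤ LA a) (a : α) : LB (π a) ≤ LA a :=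
  (h (π a)).trans_le <| csInf_le ⟨0, by rintro _ ⟨a', -, rfl⟩; exact hLA a'⟩ ⟨a, rfl, rfl⟩

theorem induces_of_forall_exists {α β γ : Type*} {π : α → β} {q : γ → β} {LA : α → ℝ}
    {L : γ → ℝ} {LB : β → ℝ} (hπ : Function.Surjective π) (hLB : Induces π LA LB)
    (hle : ∀ x, LB (q x) ≤ L x) (hlift : ∀ a, ∃ x, q x = π a ∧ L x ≤ LA a) : Induces q L LB := by
  intro b
  obtain ⟨a₀, rfl⟩ := hπ b
  unfold quotientSeminorm
  have hne : {r | ∃ x, q x = π a₀ ∧ L x = r}.Nonempty :=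
    let ⟨x, hx, _⟩ := hlift a₀
    ⟨_, x, hx, rfl⟩
  have hlower : ∀ r ∈ {r | ∃ x, q x = π a₀ ∧ L x = r}, LB (π a₀) ≤ r := by
    rintro _ ⟨x, hx, rfl⟩
    exact hx ▸ hle x
  refine le_antisymm (le_csInf hne hlower) ?_
  rw [hLB, quotientSeminorm]
  refine le_csInf ⟨_, a₀, rfl, rfl⟩ ?_
  rintro _ ⟨a, ha, rfl⟩
  obtain ⟨x, hx, hxa⟩ := hlift a
  exact (csInf_le ⟨_, hlower⟩ ⟨x, hx.trans ha, rfl⟩).trans hxa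

namespace OrderUnitSpace

section States

variable {A : OrderUnitSpace}

instance : IsOrderedAddMonoid A.carrier where
  add_le_add_left a b h c := by simpa only [add_comm _ c] using A.add_le_add_left' a b h c

instance : PosSMulMono ℝ A.carrier := .of_smul_nonneg fun r hr a ha => A.smul_nonneg' r a hr ha

theorem apply_le_mul_apply_e {φ : A.carrier →ₗ[ℝ] ℝ} (hφ : ∀ a, 0 ≤ a → 0 ≤ φ a)
    {b : A.carrier} {r : ℝ} (h : b ≤ r • A.e) : φ b ≤ r * φ A.e := by
  have := hφ _ (sub_nonneg.2 h)
  rwa [map_sub, map_smul, smul_eq_mul, sub_nonneg] at this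

theorem exists_abs_state_apply_le (b : A.carrier) : ∃ M, ∀ μ : A.State, |μ.1 b| ≤ M := by
  obtain ⟨r₁, h₁⟩ := A.orderUnit b
  obtain ⟨r₂, h₂⟩ := A.orderUnit (-b)
  refine ⟨max r₁ r₂, fun μ => abs_le.2 ⟨?_, ?_⟩⟩
  · have := apply_le_mul_apply_e μ.2.2 h₂
    rw [map_neg, μ.2.1, mul_one] at this
    linarith [le_max_right r₁ r₂]
  · have := apply_le_mul_apply_e μ.2.2 h₁
    rw [μ.2.1, mul_one] at this
    exact this.trans (le_max_left _ _)

theorem exists_state_smul_eq {φ : A.carrier →ₗ[ℝ] ℝ} (hφ : ∀ a, 0 ≤ a → 0 ≤ φ a)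
    (μ₀ : A.State) : ∃ μ : A.State, φ = φ A.e • μ.1 := by
  rcases (hφ _ A.e_nonneg).eq_or_lt with h0 | hpos
  · refine ⟨μ₀, LinearMap.ext fun b => ?_⟩
    obtain ⟨r₁, h₁⟩ := A.orderUnit b
    obtain ⟨r₂, h₂⟩ := A.orderUnit (-b)
    have hle := apply_le_mul_apply_e hφ h₁
    have hge := apply_le_mul_apply_e hφ h₂
    rw [← h0, mul_zero] at hle hge
    rw [map_neg] at hge
    rw [← h0, zero_smul, LinearMap.zero_apply]
    linarith
  · refine ⟨⟨(φ A.e)⁻¹ • φ, ?_, fun a ha => ?_⟩, ?_⟩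
    · simp [hpos.ne']
    · simpa using mul_nonneg (inv_nonneg.2 hpos.le) (hφ a ha)
    · rw [smul_smul, mul_inv_cancel₀ hpos.ne', one_smul]

theorem subsingleton_of_isEmpty_state [IsEmpty A.State] : Subsingleton A.carrier := by
  by_cases he : A.e = 0
  · suffices h : ∀ x : A.carrier, x = 0 from ⟨fun a b => by rw [h a, h b]⟩
    intro x
    obtain ⟨r₁, h₁⟩ := A.orderUnit x
    obtain ⟨r₂, h₂⟩ := A.orderUnit (-x)
    rw [he, smul_zero] at h₁ h₂
    exact le_antisymm h₁ (neg_nonpos.1 h₂)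
  · -- the Riesz extension of `t • e ↦ t` from `ℝ e` would be a state
    exfalso
    let f : A.carrier →ₗ.[ℝ] ℝ := LinearPMap.mkSpanSingleton A.e 1 he
    have hf : ∀ (t : ℝ) h, f ⟨t • A.e, h⟩ = t := fun t h => by
      simpa [f] using LinearPMap.mkSpanSingleton'_apply (σ := RingHom.id ℝ) A.e (1 : ℝ) _ t h
    have hnonneg : ∀ x : f.domain, (x : A.carrier) ∈ PointedCone.positive ℝ A.carrier →
        0 ≤ f x := by
      rintro ⟨x, hx⟩ (hx0 : 0 ≤ x)
      obtain ⟨t, rfl⟩ := Submodule.mem_span_singleton.1 hx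
      rw [hf]
      by_contra! ht
      have : 0 ≤ -A.e := by
        simpa [smul_smul, ht.ne] using smul_nonneg (neg_nonneg.2 (inv_nonpos.2 ht.le)) hx0
      exact he (le_antisymm (neg_nonneg.1 this) A.e_nonneg)
    have hdense : ∀ y, ∃ x : f.domain, (x : A.carrier) + y ∈ PointedCone.positive ℝ A.carrier := by
      intro y
      obtain ⟨r, hr⟩ := A.orderUnit (-y)
      exact ⟨⟨r • A.e, Submodule.mem_span_singleton.2 ⟨r, rfl⟩⟩, neg_le_iff_add_nonneg.1 hr⟩
    obtain ⟨μ, hμf, hμpos⟩ := riesz_extension _ f hnonneg hdense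
    have hμe : μ A.e = 1 := by
      simpa using (hμf ⟨1 • A.e, Submodule.mem_span_singleton.2 ⟨1, rfl⟩⟩).trans (hf 1 _)
    exact IsEmpty.false (α := A.State) ⟨μ, hμe, hμpos⟩

theorem State.ext {μ ν : A.State} (h : ∀ a, μ.1 a = ν.1 a) : μ = ν :=
  Subtype.ext (LinearMap.ext h)

theorem isEmbedding_coe_state : IsEmbedding fun μ : A.State => ⇑μ.1 :=
  .induced fun _ _ h => Subtype.ext (LinearMap.ext (congrFun h))

instance : T2Space A.State := isEmbedding_coe_state.t2Space

theorem isClosed_range_coe_state : IsClosed (range fun μ : A.State => ⇑μ.1) := by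
  have : (range fun μ : A.State => ⇑μ.1) =
      range ((↑) : (A.carrier →ₗ[ℝ] ℝ) → A.carrier → ℝ) ∩ {φ | φ A.e = 1} ∩
        ⋂ a ∈ {a : A.carrier | 0 ≤ a}, {φ | 0 ≤ φ a} := by
    ext φ
    simp only [mem_range, mem_inter_iff, mem_ofPred_eq, mem_iInter]
    constructor
    · rintro ⟨μ, rfl⟩
      exact ⟨⟨⟨μ.1, rfl⟩, μ.2.1⟩, μ.2.2⟩
    · rintro ⟨⟨⟨ℓ, rfl⟩, he⟩, hpos⟩
      exact ⟨⟨ℓ, he, hpos⟩, rfl⟩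
  rw [this]
  exact ((LinearMap.isClosed_range_coe _ _ _).inter (isClosed_eq (continuous_apply _)
    continuous_const)).inter (isClosed_biInter fun a _ => isClosed_le continuous_const
    (continuous_apply a))

instance : CompactSpace A.State := by
  rw [← isCompact_univ_iff, isEmbedding_coe_state.isCompact_iff, image_univ]
  choose M hM using exists_abs_state_apply_le (A := A)
  refine (isCompact_univ_pi fun b => isCompact_Icc (a := -M b) (b := M b)).of_isClosed_subset
    isClosed_range_coe_state ?_
  rintro _ ⟨μ, rfl⟩ b -
  exact abs_le.1 (hM b μ)

noncomputable def convexComb (t : unitInterval) (μ ν : A.State) : A.State :=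
  ⟨(t : ℝ) • μ.1 + (1 - (t : ℝ)) • ν.1, by simp [μ.2.1, ν.2.1], fun a ha => by
    simpa using add_nonneg (mul_nonneg t.2.1 (μ.2.2 a ha))
      (mul_nonneg (unitInterval.one_minus_nonneg t) (ν.2.2 a ha))⟩

theorem convexComb_apply (t : unitInterval) (μ ν : A.State) (a : A.carrier) :
    (convexComb t μ ν).1 a = t * μ.1 a + (1 - t) * ν.1 a :=
  rfl

theorem continuous_convexComb_left (μ ν : A.State) : Continuous fun t => convexComb t μ ν :=
  continuous_induced_rng.2 <| continuous_pi fun a => by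
    simp only [Function.comp_def, convexComb_apply]
    fun_prop

variable {L : Seminorm ℝ A.carrier}

theorem ofReal_abs_sub_le_rho (μ ν : A.State) {a : A.carrier} (ha : L a ≤ 1) :
    ENNReal.ofReal |μ.1 a - ν.1 a| ≤ A.rho L μ ν :=
  le_iSup (fun x : {a // L a ≤ 1} => ENNReal.ofReal |μ.1 x.1 - ν.1 x.1|) ⟨a, ha⟩

theorem rho_self (μ : A.State) : A.rho L μ μ = 0 := by
  simp [rho]

theorem rho_comm (μ ν : A.State) : A.rho L μ ν = A.rho L ν μ := by
  simp only [rho, abs_sub_comm]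

theorem rho_triangle (μ ν σ : A.State) : A.rho L μ σ ≤ A.rho L μ ν + A.rho L ν σ := by
  refine iSup_le fun a => ?_
  calc ENNReal.ofReal |μ.1 a.1 - σ.1 a.1|
      ≤ ENNReal.ofReal (|μ.1 a.1 - ν.1 a.1| + |ν.1 a.1 - σ.1 a.1|) :=
        ENNReal.ofReal_le_ofReal (abs_sub_le _ _ _)
    _ ≤ A.rho L μ ν + A.rho L ν σ := (ENNReal.ofReal_add_le).trans
        (add_le_add (ofReal_abs_sub_le_rho μ ν a.2) (ofReal_abs_sub_le_rho ν σ a.2))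

theorem abs_sub_le_mul_of_rho_le {μ ν : A.State} {d : ℝ} (hd : 0 ≤ d)
    (h : A.rho L μ ν ≤ ENNReal.ofReal d) (a : A.carrier) : |μ.1 a - ν.1 a| ≤ d * L a := by
  -- test `μ - ν` on `r⁻¹ • a` for every `r > L a`, then let `r` decrease to `L a`
  have key : ∀ ε > 0, |μ.1 a - ν.1 a| ≤ d * (L a + ε) := fun ε hε => by
    have hr : 0 < L a + ε := by positivity
    have hLa : L ((L a + ε)⁻¹ • a) ≤ 1 := by
      rw [map_smul_eq_mul, Real.norm_eq_abs, abs_inv, abs_of_pos hr, inv_mul_le_one₀ hr]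
      linarith
    have := (ENNReal.ofReal_le_ofReal_iff hd).1 ((ofReal_abs_sub_le_rho μ ν hLa).trans h)
    rw [map_smul, map_smul, smul_eq_mul, smul_eq_mul, ← mul_sub, abs_mul, abs_inv,
      abs_of_pos hr, inv_mul_le_iff₀ hr] at this
    linarith
  refine le_of_forall_pos_le_add fun ε hε => ?_
  calc |μ.1 a - ν.1 a| ≤ d * (L a + ε / (d + 1)) := key _ (by positivity)
    _ = d * L a + d / (d + 1) * ε := by ring
    _ ≤ d * L a + ε := by
      gcongr
      exact mul_le_of_le_one_left hε.le ((div_le_one (by positivity)).2 (by linarith))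

theorem ballTopology_le (L : Seminorm ℝ A.carrier) :
    ballTopology (A.rho L) ≤ (inferInstance : TopologicalSpace A.State) := by
  let := ballTopology (A.rho L)
  refine continuous_iff_le_induced.1 (continuous_pi fun a => continuous_iff_continuousAt.2
    fun μ => Metric.tendsto_nhds.2 fun ε hε => ?_)
  have hη : 0 < ε / (L a + 1) := by positivity
  have hball : {ν | A.rho L μ ν < ENNReal.ofReal (ε / (L a + 1))} ∈ 𝓝 μ :=
    (isOpen_ballTopology_ball _ μ (ENNReal.ofReal_pos.2 hη)).mem_nhds
      (by simpa [rho_self] using hη)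
  filter_upwards [hball] with ν hν
  rw [Real.dist_eq, abs_sub_comm]
  calc |μ.1 a - ν.1 a| ≤ ε / (L a + 1) * L a := abs_sub_le_mul_of_rho_le hη.le hν.le a
    _ < ε := by
      rw [div_mul_eq_mul_div, div_lt_iff₀ (by positivity)]
      nlinarith [apply_nonneg L a]

theorem isLipNorm_of_compactSpace (hL : A.IsLipschitz L)
    (hc : @CompactSpace A.State (ballTopology (A.rho L))) : A.IsLipNorm L :=
  ⟨hL, le_antisymm (ballTopology_le L) (TopologicalSpace.le_of_compactSpace_of_t2Space hc
    inferInstance (ballTopology_le L))⟩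

theorem isLipNorm_of_subsingleton [Subsingleton A.carrier] (L : Seminorm ℝ A.carrier) :
    A.IsLipNorm L := by
  have : IsEmpty A.State := ⟨fun μ => by simpa [Subsingleton.elim A.e 0] using μ.2.1⟩
  refine isLipNorm_of_compactSpace (fun a => ?_) (@Finite.compactSpace A.State (ballTopology _) _)
  simp only [Subsingleton.elim a 0, map_zero, true_iff]
  exact ⟨0, Subsingleton.elim _ _⟩

theorem isOpen_rho_ball (hL : A.IsLipNorm L) (μ : A.State) {ε : ℝ≥0∞} (hε : 0 < ε) :
    IsOpen {ν | A.rho L μ ν < ε} := by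
  have := isOpen_ballTopology_ball (A.rho L) μ hε
  rwa [hL.2] at this

theorem tendsto_rho (hL : A.IsLipNorm L) (μ : A.State) :
    Tendsto (A.rho L μ) (𝓝 μ) (𝓝 0) :=
  ENNReal.tendsto_nhds_zero.2 fun ε hε => by
    filter_upwards [(isOpen_rho_ball hL μ hε).mem_nhds (show A.rho L μ μ < ε by rwa [rho_self])]
      with ν hν using hν.le

theorem rho_convexComb (t : unitInterval) (μ ν : A.State) :
    A.rho L ν (convexComb t μ ν) = ENNReal.ofReal t * A.rho L ν μ := by
  have h (a : A.carrier) : |ν.1 a - (convexComb t μ ν).1 a| = t * |ν.1 a - μ.1 a| := by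
    rw [convexComb_apply, show ν.1 a - (t * μ.1 a + (1 - t) * ν.1 a) = t * (ν.1 a - μ.1 a) by
      ring, abs_mul, abs_of_nonneg t.2.1]
  simp only [rho, h, ENNReal.ofReal_mul t.2.1, ENNReal.mul_iSup]

theorem rho_lt_top (hL : A.IsLipNorm L) (μ ν : A.State) : A.rho L ν μ < ⊤ := by
  -- `ρ(ν, t μ + (1 - t) ν) = t ρ(ν, μ)`, and the weak*-open unit ρ-ball about `ν` contains such a
  -- point with `t > 0`
  have hν : convexComb 0 μ ν = ν := State.ext fun a => by simp [convexComb_apply]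
  have hball := (continuous_convexComb_left μ ν).tendsto 0 |>.eventually <|
    (isOpen_rho_ball hL ν one_pos).mem_nhds (show A.rho L ν (convexComb 0 μ ν) < 1 by
      simp [hν, rho_self])
  obtain ⟨t, ht, ht0⟩ := ((hball.filter_mono nhdsWithin_le_nhds).and
    (self_mem_nhdsWithin : {(0 : unitInterval)}ᶜ ∈ 𝓝[≠] 0)).exists
  have ht_pos : ENNReal.ofReal t ≠ 0 :=
    (ENNReal.ofReal_pos.2 (lt_of_le_of_ne t.2.1 fun h => ht0 (Subtype.ext h.symm))).ne'
  rw [rho_convexComb] at ht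
  exact lt_top_iff_ne_top.2 fun h => by simp [h, ENNReal.mul_top ht_pos] at ht

theorem exists_abs_sub_le (hL : A.IsLipNorm L) :
    ∃ D, ∀ μ ν : A.State, ∀ a, L a ≤ 1 → |μ.1 a - ν.1 a| ≤ D := by
  obtain ⟨s, hs⟩ := isCompact_univ.elim_nhds_subcover (fun μ => {ν | A.rho L μ ν < 1})
    fun μ _ => (isOpen_rho_ball hL μ one_pos).mem_nhds (by simp [rho_self])
  have hnear : ∀ μ, ∃ i ∈ s, A.rho L i μ < 1 := fun μ => by simpa using hs.2 (mem_univ μ)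
  set E := ∑ i ∈ s, ∑ j ∈ s, A.rho L i j
  have hE : 1 + E + 1 ≠ ⊤ := by
    simpa [E, ENNReal.sum_ne_top] using fun i _ j _ => (rho_lt_top hL j i).ne
  refine ⟨(1 + E + 1).toReal, fun μ ν a ha => ?_⟩
  obtain ⟨i, hi, hiμ⟩ := hnear μ
  obtain ⟨j, hj, hjν⟩ := hnear ν
  have hμi : A.rho L μ i ≤ 1 := by
    rw [rho_comm]
    exact hiμ.le
  have hij : A.rho L i j ≤ E :=
    (Finset.single_le_sum (f := A.rho L i) (fun _ _ => zero_le) hj).trans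
      (Finset.single_le_sum (f := fun i => ∑ j ∈ s, A.rho L i j) (fun _ _ => zero_le) hi)
  have hρ : A.rho L μ ν ≤ 1 + E + 1 := calc
    A.rho L μ ν ≤ A.rho L μ i + (A.rho L i j + A.rho L j ν) :=
      (rho_triangle μ i ν).trans (add_le_add le_rfl (rho_triangle i j ν))
    _ ≤ 1 + E + 1 := by
      rw [← add_assoc]
      exact add_le_add (add_le_add hμi hij) hjν.le
  rw [← ENNReal.ofReal_le_ofReal_iff ENNReal.toReal_nonneg, ENNReal.ofReal_toReal hE]
  exact (ofReal_abs_sub_le_rho μ ν ha).trans hρ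

end States

section Bridge

variable {B₁ B₂ : OrderUnitSpace}

noncomputable def joinState (p : unitInterval × B₁.State × B₂.State) : (B₁.prod B₂).State :=
  convexComb p.1 (B₁.leftState B₂ p.2.1) (B₁.rightState B₂ p.2.2)

theorem joinState_apply (p : unitInterval × B₁.State × B₂.State) (x : B₁.carrier × B₂.carrier) :
    (joinState p).1 x = p.1 * p.2.1.1 x.1 + (1 - p.1) * p.2.2.1 x.2 :=
  rfl

theorem joinState_surjective [Nonempty B₁.State] [Nonempty B₂.State] :
    Function.Surjective (joinState (B₁ := B₁) (B₂ := B₂)) := by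
  intro σ
  set φ₁ := σ.1 ∘ₗ LinearMap.inl ℝ B₁.carrier B₂.carrier
  set φ₂ := σ.1 ∘ₗ LinearMap.inr ℝ B₁.carrier B₂.carrier
  have hφ₁ : ∀ b, 0 ≤ b → 0 ≤ φ₁ b := fun b hb => σ.2.2 (b, 0) ⟨hb, le_rfl⟩
  have hφ₂ : ∀ c, 0 ≤ c → 0 ≤ φ₂ c := fun c hc => σ.2.2 (0, c) ⟨le_rfl, hc⟩
  have hσ (x : B₁.carrier × B₂.carrier) : σ.1 x = φ₁ x.1 + φ₂ x.2 := by
    simp [φ₁, φ₂, ← map_add]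
  have hsum : φ₁ B₁.e + φ₂ B₂.e = 1 := (hσ (B₁.e, B₂.e)).symm.trans σ.2.1
  obtain ⟨f, hf⟩ := exists_state_smul_eq hφ₁ (Classical.arbitrary _)
  obtain ⟨g, hg⟩ := exists_state_smul_eq hφ₂ (Classical.arbitrary _)
  have ht : φ₁ B₁.e ∈ unitInterval := ⟨hφ₁ _ B₁.e_nonneg, by linarith [hφ₂ _ B₂.e_nonneg]⟩
  refine ⟨(⟨_, ht⟩, f, g), State.ext fun x => ?_⟩
  change φ₁ B₁.e * f.1 x.1 + (1 - φ₁ B₁.e) * g.1 x.2 = σ.1 x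
  rw [hσ, ← hsum, add_sub_cancel_left]
  congr 1
  · simpa using (LinearMap.congr_fun hf x.1).symm
  · simpa using (LinearMap.congr_fun hg x.2).symm

noncomputable def pairSeminorm (δ : ℝ) (p : B₁.State × B₂.State) :
    Seminorm ℝ (B₁.carrier × B₂.carrier) :=
  (normSeminorm ℝ ℝ).comp
    (δ⁻¹ • (p.1.1 ∘ₗ LinearMap.fst ℝ _ _ - p.2.1 ∘ₗ LinearMap.snd ℝ _ _))

theorem pairSeminorm_apply (δ : ℝ) (p : B₁.State × B₂.State) (x : B₁.carrier × B₂.carrier) :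
    pairSeminorm δ p x = |δ⁻¹ * (p.1.1 x.1 - p.2.1 x.2)| :=
  rfl

theorem bddAbove_range_pairSeminorm (R : Set (B₁.State × B₂.State)) (δ : ℝ) :
    BddAbove (range fun p : R => pairSeminorm δ p.1) := by
  refine Seminorm.bddAbove_range_iff.2 fun x => ?_
  obtain ⟨M₁, hM₁⟩ := exists_abs_state_apply_le x.1
  obtain ⟨M₂, hM₂⟩ := exists_abs_state_apply_le x.2
  refine ⟨|δ⁻¹| * (M₁ + M₂), ?_⟩
  rintro _ ⟨p, rfl⟩
  change pairSeminorm δ p.1 x ≤ _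
  rw [pairSeminorm_apply, abs_mul]
  gcongr
  exact (abs_sub _ _).trans (add_le_add (hM₁ _) (hM₂ _))

noncomputable def bridge (R : Set (B₁.State × B₂.State)) (δ : ℝ) (L₁ : Seminorm ℝ B₁.carrier)
    (L₂ : Seminorm ℝ B₂.carrier) : Seminorm ℝ (B₁.carrier × B₂.carrier) :=
  L₁.comp (LinearMap.fst ℝ _ _) ⊔ L₂.comp (LinearMap.snd ℝ _ _) ⊔ ⨆ p : R, pairSeminorm δ p.1

variable {R : Set (B₁.State × B₂.State)} {δ : ℝ} {L₁ : Seminorm ℝ B₁.carrier}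
  {L₂ : Seminorm ℝ B₂.carrier}

theorem le_bridge_left (x : B₁.carrier × B₂.carrier) : L₁ x.1 ≤ bridge R δ L₁ L₂ x :=
  Seminorm.le_def.1
    (le_sup_left.trans le_sup_left : L₁.comp (LinearMap.fst ℝ _ _) ≤ bridge R δ L₁ L₂) x

theorem le_bridge_right (x : B₁.carrier × B₂.carrier) : L₂ x.2 ≤ bridge R δ L₁ L₂ x :=
  Seminorm.le_def.1
    (le_sup_right.trans le_sup_left : L₂.comp (LinearMap.snd ℝ _ _) ≤ bridge R δ L₁ L₂) x

theorem abs_sub_le_mul_bridge (hδ : 0 < δ) {f : B₁.State} {g : B₂.State} (h : (f, g) ∈ R)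
    (x : B₁.carrier × B₂.carrier) : |f.1 x.1 - g.1 x.2| ≤ δ * bridge R δ L₁ L₂ x := by
  have := Seminorm.le_def.1 ((le_ciSup (f := fun p : R => pairSeminorm δ p.1)
    (bddAbove_range_pairSeminorm R δ) ⟨_, h⟩).trans
    (le_sup_right : _ ≤ bridge R δ L₁ L₂)) x
  rw [pairSeminorm_apply, abs_mul, abs_inv, abs_of_pos hδ, inv_mul_le_iff₀ hδ] at this
  exact this

theorem bridge_le (hδ : 0 < δ) {x : B₁.carrier × B₂.carrier} {r : ℝ} (h₁ : L₁ x.1 ≤ r)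
    (h₂ : L₂ x.2 ≤ r) (h : ∀ p ∈ R, |p.1.1 x.1 - p.2.1 x.2| ≤ δ * r) :
    bridge R δ L₁ L₂ x ≤ r := by
  refine sup_le (sup_le h₁ h₂) ?_
  rw [Seminorm.iSup_apply (bddAbove_range_pairSeminorm R δ)]
  refine Real.iSup_le (fun p => ?_) ((apply_nonneg L₁ _).trans h₁)
  rw [pairSeminorm_apply, abs_mul, abs_inv, abs_of_pos hδ, inv_mul_le_iff₀ hδ]
  exact h p.1 p.2

theorem bridge_isLipschitz (hδ : 0 < δ) (hL₁ : B₁.IsLipschitz L₁) (hL₂ : B₂.IsLipschitz L₂)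
    {f₀ : B₁.State} {g₀ : B₂.State} (h₀ : (f₀, g₀) ∈ R) :
    (B₁.prod B₂).IsLipschitz (bridge R δ L₁ L₂) := by
  intro x
  constructor
  · intro hx
    obtain ⟨s, hs⟩ := (hL₁ _).1 (le_antisymm (hx ▸ le_bridge_left x) (apply_nonneg _ _))
    obtain ⟨t, ht⟩ := (hL₂ _).1 (le_antisymm (hx ▸ le_bridge_right x) (apply_nonneg _ _))
    have hst : |s - t| ≤ 0 := by
      simpa [hs, ht, f₀.2.1, g₀.2.1, hx] using abs_sub_le_mul_bridge (L₁ := L₁) (L₂ := L₂) hδ h₀ x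
    rw [abs_nonpos_iff, sub_eq_zero] at hst
    exact ⟨s, Prod.ext hs (ht.trans (by rw [hst]; rfl))⟩
  · rintro ⟨t, rfl⟩
    have hnull {A : OrderUnitSpace} {L : Seminorm ℝ A.carrier} (hL : A.IsLipschitz L) :
        L (t • A.e) = 0 := by
      rw [map_smul_eq_mul, (hL _).2 ⟨1, (one_smul _ _).symm⟩, mul_zero]
    refine le_antisymm (bridge_le hδ (hnull hL₁).le (hnull hL₂).le fun p _ => ?_)
      (apply_nonneg _ _)
    simp [p.1.2.1, p.2.2.1]

theorem rho_leftState_rightState_le (hδ : 0 < δ) {f : B₁.State} {g : B₂.State} (h : (f, g) ∈ R) :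
    (B₁.prod B₂).rho (bridge R δ L₁ L₂) (B₁.leftState B₂ f) (B₁.rightState B₂ g) ≤
      ENNReal.ofReal δ :=
  iSup_le fun x => ENNReal.ofReal_le_ofReal <|
    (abs_sub_le_mul_bridge hδ h x.1).trans (mul_le_of_le_one_right hδ.le x.2)

theorem rho_joinState_le (hδ : 0 < δ) {f₀ : B₁.State} {g₀ : B₂.State} (h₀ : (f₀, g₀) ∈ R)
    {D₁ D₂ : ℝ} (hD₁ : ∀ f f' : B₁.State, ∀ b, L₁ b ≤ 1 → |f.1 b - f'.1 b| ≤ D₁)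
    (hD₂ : ∀ g g' : B₂.State, ∀ c, L₂ c ≤ 1 → |g.1 c - g'.1 c| ≤ D₂)
    (p q : unitInterval × B₁.State × B₂.State) :
    (B₁.prod B₂).rho (bridge R δ L₁ L₂) (joinState p) (joinState q) ≤
      B₁.rho L₁ p.2.1 q.2.1 + B₂.rho L₂ p.2.2 q.2.2 +
        ENNReal.ofReal (|(p.1 : ℝ) - q.1| * (D₁ + δ + D₂)) := by
  obtain ⟨t, f, g⟩ := p
  obtain ⟨t', f', g'⟩ := q
  refine iSup_le fun ⟨x, hx⟩ => ?_
  have hb : L₁ x.1 ≤ 1 := (le_bridge_left x).trans hx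
  have hc : L₂ x.2 ≤ 1 := (le_bridge_right x).trans hx
  -- `f' b - g' c` is bounded by passing through the `δ`-close pair `(f₀, g₀)`
  have hcross : |f'.1 x.1 - g'.1 x.2| ≤ D₁ + δ + D₂ :=
    ((abs_sub_le _ (g₀.1 x.2) _).trans (add_le_add (abs_sub_le _ (f₀.1 x.1) _) le_rfl)).trans
      (add_le_add (add_le_add (hD₁ _ _ _ hb) ((abs_sub_le_mul_bridge hδ h₀ x).trans
        (mul_le_of_le_one_right hδ.le hx))) (hD₂ _ _ _ hc))
  have hsplit : (joinState (t, f, g)).1 x - (joinState (t', f', g')).1 x =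
      t * (f.1 x.1 - f'.1 x.1) + (1 - t) * (g.1 x.2 - g'.1 x.2) +
        (t - t') * (f'.1 x.1 - g'.1 x.2) := by
    rw [joinState_apply, joinState_apply]
    ring
  have habs : |(joinState (t, f, g)).1 x - (joinState (t', f', g')).1 x| ≤
      |f.1 x.1 - f'.1 x.1| + |g.1 x.2 - g'.1 x.2| + |(t : ℝ) - t'| * (D₁ + δ + D₂) := by
    rw [hsplit]
    refine (abs_add_three _ _ _).trans (add_le_add (add_le_add ?_ ?_) ?_) <;> rw [abs_mul]
    · exact mul_le_of_le_one_left (abs_nonneg _) (abs_le.2 ⟨by linarith [t.2.1], t.2.2⟩)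
    · exact mul_le_of_le_one_left (abs_nonneg _)
        (abs_le.2 ⟨by linarith [t.2.2], unitInterval.one_minus_le_one t⟩)
    · exact mul_le_mul_of_nonneg_left hcross (abs_nonneg _)
  calc ENNReal.ofReal |(joinState (t, f, g)).1 x - (joinState (t', f', g')).1 x|
      ≤ ENNReal.ofReal |f.1 x.1 - f'.1 x.1| + ENNReal.ofReal |g.1 x.2 - g'.1 x.2| +
          ENNReal.ofReal (|(t : ℝ) - t'| * (D₁ + δ + D₂)) :=
        (ENNReal.ofReal_le_ofReal habs).trans
          (ENNReal.ofReal_add_le.trans (add_le_add ENNReal.ofReal_add_le le_rfl))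
    _ ≤ _ := add_le_add (add_le_add (ofReal_abs_sub_le_rho _ _ hb) (ofReal_abs_sub_le_rho _ _ hc))
        le_rfl

theorem bridge_isLipNorm (hδ : 0 < δ) (hL₁ : B₁.IsLipNorm L₁) (hL₂ : B₂.IsLipNorm L₂)
    {f₀ : B₁.State} {g₀ : B₂.State} (h₀ : (f₀, g₀) ∈ R) :
    (B₁.prod B₂).IsLipNorm (bridge R δ L₁ L₂) := by
  obtain ⟨D₁, hD₁⟩ := exists_abs_sub_le hL₁
  obtain ⟨D₂, hD₂⟩ := exists_abs_sub_le hL₂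
  have : Nonempty B₁.State := ⟨f₀⟩
  have : Nonempty B₂.State := ⟨g₀⟩
  have hcont : Continuous[_, ballTopology ((B₁.prod B₂).rho (bridge R δ L₁ L₂))] joinState := by
    refine continuous_ballTopology rho_triangle fun p => tendsto_of_tendsto_of_tendsto_of_le_of_le
      tendsto_const_nhds ?_ (fun _ => zero_le) (rho_joinState_le hδ h₀ hD₁ hD₂ p)
    have h₁ := (tendsto_rho hL₁ p.2.1).comp ((continuous_fst.comp continuous_snd).tendsto p)
    have h₂ := (tendsto_rho hL₂ p.2.2).comp ((continuous_snd.comp continuous_snd).tendsto p)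
    have h₃ : Tendsto (fun q : unitInterval × B₁.State × B₂.State =>
        ENNReal.ofReal (|(p.1 : ℝ) - q.1| * (D₁ + δ + D₂))) (𝓝 p) (𝓝 0) := by
      have hc : Continuous fun q : unitInterval × B₁.State × B₂.State =>
          |(p.1 : ℝ) - q.1| * (D₁ + δ + D₂) := by fun_prop
      simpa using ENNReal.tendsto_ofReal (hc.tendsto p)
    simpa using (h₁.add h₂).add h₃
  exact isLipNorm_of_compactSpace (bridge_isLipschitz hδ hL₁.1 hL₂.1 h₀)
    (@Function.Surjective.compactSpace _ _ _ (ballTopology _) _ hcont _ joinState_surjective)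

variable {A : OrderUnitSpace} {LA : Seminorm ℝ A.carrier} {π₁ : A.carrier →ₗ[ℝ] B₁.carrier}
  {π₂ : A.carrier →ₗ[ℝ] B₂.carrier}

theorem distq_le_of_correspondence (hL₁ : B₁.IsLipNorm L₁) (hL₂ : B₂.IsLipNorm L₂)
    (hs₁ : Function.Surjective π₁) (hs₂ : Function.Surjective π₂)
    (hq₁ : Induces π₁ LA L₁) (hq₂ : Induces π₂ LA L₂) (hδ : 0 < δ)
    (hR : ∀ p ∈ R, ∀ a, |p.1.1 (π₁ a) - p.2.1 (π₂ a)| ≤ δ * LA a)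
    (h₁ : ∀ f, ∃ g, (f, g) ∈ R) (h₂ : ∀ g, ∃ f, (f, g) ∈ R) :
    B₁.distq B₂ L₁ L₂ ≤ ENNReal.ofReal δ := by
  have hlift (a : A.carrier) : bridge R δ L₁ L₂ (π₁ a, π₂ a) ≤ LA a :=
    bridge_le hδ (le_of_induces hq₁ (apply_nonneg LA) a) (le_of_induces hq₂ (apply_nonneg LA) a)
      fun p hp => hR p hp a
  have hLip : (B₁.prod B₂).IsLipNorm (bridge R δ L₁ L₂) := by
    rcases isEmpty_or_nonempty B₁.State with h | ⟨⟨f₀⟩⟩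
    · have : IsEmpty B₂.State := ⟨fun g => h.false (h₂ g).choose⟩
      have := subsingleton_of_isEmpty_state (A := B₁)
      have := subsingleton_of_isEmpty_state (A := B₂)
      exact isLipNorm_of_subsingleton _
    · exact bridge_isLipNorm hδ hL₁ hL₂ (h₁ f₀).choose_spec
  refine (iInf₂_le (bridge R δ L₁ L₂) ⟨hLip, ?_, ?_⟩).trans (hausdorffDistWith_le ?_ ?_)
  · rintro _ ⟨f, rfl⟩
    obtain ⟨g, hg⟩ := h₁ f
    exact ⟨_, mem_range_self g, rho_leftState_rightState_le hδ hg⟩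
  · rintro _ ⟨g, rfl⟩
    obtain ⟨f, hf⟩ := h₂ g
    exact ⟨_, mem_range_self f, rho_leftState_rightState_le hδ hf⟩
  · exact induces_of_forall_exists hs₁ hq₁ le_bridge_left fun a => ⟨_, rfl, hlift a⟩
  · exact induces_of_forall_exists hs₂ hq₂ le_bridge_right fun a => ⟨_, rfl, hlift a⟩

end Bridge

end OrderUnitSpace

theorem distq_quotients_le_hausdorff_general (A : OrderUnitSpace)
    (LA : Seminorm ℝ A.carrier)
    (K₁ K₂ : Set A.State)
    (B₁ B₂ : OrderUnitSpace)
    (L₁ : Seminorm ℝ B₁.carrier) (L₂ : Seminorm ℝ B₂.carrier)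
    (π₁ : A.carrier →ₗ[ℝ] B₁.carrier) (π₂ : A.carrier →ₗ[ℝ] B₂.carrier)
    (hπ₁ : A.IsMorphism B₁ π₁) (hπ₂ : A.IsMorphism B₂ π₂)
    (hs₁ : Function.Surjective π₁) (hs₂ : Function.Surjective π₂)
    (hq₁ : Induces π₁ (fun a => LA a) (fun b => L₁ b))
    (hq₂ : Induces π₂ (fun a => LA a) (fun b => L₂ b))
    (hr₁ : Set.range (A.pullState B₁ π₁ hπ₁) = K₁)
    (hr₂ : Set.range (A.pullState B₂ π₂ hπ₂) = K₂)
    (hL₁ : B₁.IsLipNorm L₁) (hL₂ : B₂.IsLipNorm L₂) :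
    B₁.distq B₂ L₁ L₂ ≤ hausdorffDistWith (A.rho LA) K₁ K₂ := by
  subst hr₁ hr₂
  refine le_of_forall_gt_imp_ge_of_dense fun c hc => ?_
  rcases eq_or_ne c ⊤ with rfl | hc_top
  · exact le_top
  have hδ : 0 < c.toReal := ENNReal.toReal_pos (zero_le.trans_lt hc).ne' hc_top
  rw [← ENNReal.ofReal_toReal hc_top] at hc ⊢
  refine OrderUnitSpace.distq_le_of_correspondence hL₁ hL₂ hs₁ hs₂ hq₁ hq₂ hδ
    (R := {p | A.rho LA (A.pullState B₁ π₁ hπ₁ p.1) (A.pullState B₂ π₂ hπ₂ p.2) < _})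
    (fun p hp => OrderUnitSpace.abs_sub_le_mul_of_rho_le hδ.le hp.le) (fun f => ?_) (fun g => ?_)
  · obtain ⟨_, ⟨g, rfl⟩, h⟩ := exists_lt_of_hausdorffDistWith_lt_left hc (mem_range_self f)
    exact ⟨g, h⟩
  · obtain ⟨_, ⟨f, rfl⟩, h⟩ := exists_lt_of_hausdorffDistWith_lt_right hc (mem_range_self g)
    exact ⟨f, h⟩

/-- **Proposition 5.7 of Rieffel.** Let `(A, L_A)` be a compact quantum metric space
and let `K₁`, `K₂` be compact convex subsets of `S(A)`, with associated quotient
compact quantum metric spaces `(B₁, L₁)` and `(B₂, L₂)` (here realized as surjective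
morphisms `π₁, π₂` carrying `L_A` to the quotient seminorms `L₁, L₂`, and whose dual
state embeddings have ranges exactly `K₁` and `K₂`). Then
`dist_q(B₁, B₂) ≤ dist_H^{ρ_{L_A}}(K₁, K₂)`. -/
theorem distq_quotients_le_hausdorff (A : OrderUnitSpace)
    (LA : Seminorm ℝ A.carrier) (hLA : A.IsLipNorm LA)
    (K₁ K₂ : Set A.State) (hK₁c : IsCompact K₁) (hK₂c : IsCompact K₂)
    (hK₁v : StateConvex A K₁) (hK₂v : StateConvex A K₂)
    (B₁ B₂ : OrderUnitSpace)
    (L₁ : Seminorm ℝ B₁.carrier) (L₂ : Seminorm ℝ B₂.carrier)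
    (π₁ : A.carrier →ₗ[ℝ] B₁.carrier) (π₂ : A.carrier →ₗ[ℝ] B₂.carrier)
    (hπ₁ : A.IsMorphism B₁ π₁) (hπ₂ : A.IsMorphism B₂ π₂)
    (hs₁ : Function.Surjective π₁) (hs₂ : Function.Surjective π₂)
    (hq₁ : Induces π₁ (fun a => LA a) (fun b => L₁ b))
    (hq₂ : Induces π₂ (fun a => LA a) (fun b => L₂ b))
    (hr₁ : Set.range (A.pullState B₁ π₁ hπ₁) = K₁)
    (hr₂ : Set.range (A.pullState B₂ π₂ hπ₂) = K₂)
    (hL₁ : B₁.IsLipNorm L₁) (hL₂ : B₂.IsLipNorm L₂) :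
    B₁.distq B₂ L₁ L₂ ≤ hausdorffDistWith (A.rho LA) K₁ K₂ :=
  distq_quotients_le_hausdorff_general A LA K₁ K₂ B₁ B₂ L₁ L₂ π₁ π₂ hπ₁ hπ₂ hs₁ hs₂ hq₁ hq₂ hr₁ hr₂
    hL₁ hL₂
end

section
/- Let (A,L) be a compact quantum metric space of radius r, and let π : A → B be a morphism of order-unit spaces, where B has at least one state. Then for every a ∈ A, ‖a‖ ≤ ‖π(a)‖ + 2r·L(a). -/
open scoped ENNReal

/-!
By Hahn–Banach applied to the sublinear functional `x ↦ inf {t | x ≤ t e}`, the order-unit norm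
of `a` is the supremum of `|μ a|` over the states `μ`. Two states differ on `a` by at most
`ρ_L(μ, ν) L(a) ≤ 2 r L(a)`, and the pulled-back state `ν ∘ π` satisfies `|ν (π a)| ≤ ‖π a‖`;
comparing every state with it gives the bound.
-/

theorem exists_linearMap_le_sublinear_apply_eq {E : Type*} [AddCommGroup E] [Module ℝ E]
    (N : E → ℝ) (N_hom : ∀ c : ℝ, 0 < c → ∀ x, N (c • x) = c * N x)
    (N_add : ∀ x y, N (x + y) ≤ N x + N y) (x : E) :
    ∃ g : E →ₗ[ℝ] ℝ, (∀ y, g y ≤ N y) ∧ g x = N x := by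
  have N_zero : N 0 = 0 := by
    have h := N_hom 2 two_pos 0
    rw [smul_zero] at h
    linarith
  let f : E →ₗ.[ℝ] ℝ := LinearPMap.mkSpanSingleton' x (N x) fun c hc => by
    rcases smul_eq_zero.1 hc with rfl | rfl <;> simp [N_zero]
  have hf : ∀ z : f.domain, f z ≤ N z := by
    rintro ⟨z, hz⟩
    obtain ⟨c, rfl⟩ := Submodule.mem_span_singleton.1 hz
    rw [LinearPMap.mkSpanSingleton'_apply, smul_eq_mul, RingHom.id_apply]
    change c * N x ≤ N (c • x)
    rcases lt_trichotomy c 0 with hc | rfl | hc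
    · -- `c • x = (-c) • (-x)` and `-N x ≤ N (-x)`
      have h := N_add x (-x)
      rw [add_neg_cancel, N_zero] at h
      rw [← neg_neg c, neg_smul, ← smul_neg, N_hom (-c) (neg_pos.2 hc)]
      nlinarith
    · simp [N_zero]
    · rw [N_hom c hc]
  obtain ⟨g, hgf, hgN⟩ := exists_extension_of_le_sublinear f N N_hom N_add hf
  exact ⟨g, hgN, (hgf ⟨x, Submodule.mem_span_singleton_self x⟩).trans
    (LinearPMap.mkSpanSingleton'_apply_self _ _ _ _)⟩

theorem LinearMap.abs_apply_le_mul_seminorm {E : Type*} [AddCommGroup E] [Module ℝ E]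
    (φ : E →ₗ[ℝ] ℝ) (p : Seminorm ℝ E) {D : ℝ} (h : ∀ y, p y ≤ 1 → |φ y| ≤ D) (x : E) :
    |φ x| ≤ D * p x := by
  have bound : ∀ s, p x < s → |φ x| ≤ D * s := by
    intro s hs
    have hs0 : 0 < s := (apply_nonneg p x).trans_lt hs
    have hy : p (s⁻¹ • x) ≤ 1 := by
      rw [map_smul_eq_mul, Real.norm_eq_abs, abs_inv, abs_of_pos hs0, inv_mul_le_one₀ hs0]
      exact hs.le
    have := h _ hy
    rw [map_smul, smul_eq_mul, abs_mul, abs_inv, abs_of_pos hs0, inv_mul_le_iff₀ hs0] at this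
    linarith
  exact ge_of_tendsto (x := nhdsWithin (p x) (Set.Ioi (p x)))
    (((continuous_const_mul D).tendsto (p x)).mono_left nhdsWithin_le_nhds)
    (eventually_nhdsWithin_of_forall bound)

namespace OrderUnitSpace

variable {A : OrderUnitSpace}

instance inst_s12 : IsOrderedAddMonoid A.carrier where
  add_le_add_left a b h c := by simpa only [add_comm c] using A.add_le_add_left' a b h c

instance inst_s12_2 : PosSMulMono ℝ A.carrier :=
  PosSMulMono.of_smul_nonneg fun c hc b hb => A.smul_nonneg' c b hc hb

namespace State

theorem mono (μ : A.State) {x y : A.carrier} (h : x ≤ y) : μ.1 x ≤ μ.1 y := by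
  simpa using μ.2.2 _ (sub_nonneg.2 h)

theorem apply_smul_e (μ : A.State) (s : ℝ) : μ.1 (s • A.e) = s := by
  rw [map_smul, smul_eq_mul, μ.2.1, mul_one]

theorem abs_apply_le_onorm (μ : A.State) (x : A.carrier) : |μ.1 x| ≤ A.onorm x := by
  obtain ⟨r, hr⟩ := A.orderUnit x
  obtain ⟨s, hs⟩ := A.orderUnit (-x)
  have hne : {r : ℝ | -(r • A.e) ≤ x ∧ x ≤ r • A.e}.Nonempty :=
    ⟨max r s, neg_le.1 (hs.trans (A.smul_e_mono (le_max_right r s))),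
      hr.trans (A.smul_e_mono (le_max_left r s))⟩
  refine le_csInf hne fun t ⟨hlo, hhi⟩ => abs_le.2 ⟨?_, ?_⟩
  · simpa [μ.apply_smul_e] using μ.mono hlo
  · simpa [μ.apply_smul_e] using μ.mono hhi

end State

variable (A) in
/-- The states are exactly the linear functionals dominated by this sublinear functional. -/
noncomputable def upperGauge (x : A.carrier) : ℝ := sInf {r : ℝ | x ≤ r • A.e}

theorem le_upperGauge_smul_e (x : A.carrier) : x ≤ A.upperGauge x • A.e := by
  rw [← sub_nonpos]
  refine A.arch _ fun t ht => sub_le_iff_le_add.2 ?_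
  obtain ⟨u, hu, hut⟩ := exists_lt_of_csInf_lt (A.orderUnit x) (lt_add_of_pos_right _ ht)
  rw [← add_smul, add_comm]
  exact le_trans hu (A.smul_e_mono hut.le)

theorem State.apply_le_upperGauge (μ : A.State) (x : A.carrier) : μ.1 x ≤ A.upperGauge x :=
  le_csInf (A.orderUnit x) fun s hs => by simpa [μ.apply_smul_e] using μ.mono hs

section Nonempty

variable [Nonempty A.State]

theorem bddBelow_setOf_le_smul_e (x : A.carrier) : BddBelow {r : ℝ | x ≤ r • A.e} :=
  let μ : A.State := Classical.arbitrary _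
  ⟨μ.1 x, fun s hs => by simpa [μ.apply_smul_e] using μ.mono hs⟩

theorem upperGauge_le {x : A.carrier} {s : ℝ} (h : x ≤ s • A.e) : A.upperGauge x ≤ s :=
  csInf_le (bddBelow_setOf_le_smul_e x) h

theorem upperGauge_add_le (x y : A.carrier) :
    A.upperGauge (x + y) ≤ A.upperGauge x + A.upperGauge y :=
  upperGauge_le <| add_smul (A.upperGauge x) _ A.e ▸
    add_le_add (le_upperGauge_smul_e x) (le_upperGauge_smul_e y)

theorem upperGauge_smul {c : ℝ} (hc : 0 < c) (x : A.carrier) :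
    A.upperGauge (c • x) = c * A.upperGauge x := by
  have hle : ∀ d : ℝ, 0 < d → ∀ z : A.carrier, A.upperGauge (d • z) ≤ d * A.upperGauge z :=
    fun d hd z => upperGauge_le <| mul_smul d (A.upperGauge z) A.e ▸
      smul_le_smul_of_nonneg_left (le_upperGauge_smul_e z) hd.le
  refine (hle c hc x).antisymm ?_
  have h := hle c⁻¹ (inv_pos.2 hc) (c • x)
  rw [inv_smul_smul₀ hc.ne'] at h
  rwa [← le_inv_mul_iff₀ hc]

theorem isState_of_le_upperGauge (φ : A.carrier →ₗ[ℝ] ℝ) (hφ : ∀ x, φ x ≤ A.upperGauge x) :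
    A.IsState φ := by
  refine ⟨le_antisymm ?_ ?_, fun x hx => ?_⟩
  · exact (hφ A.e).trans (upperGauge_le (one_smul ℝ A.e).ge)
  · have h := (hφ (-A.e)).trans (upperGauge_le (s := -1) (by rw [neg_smul, one_smul]))
    rw [map_neg] at h
    linarith
  · have h := (hφ (-x)).trans (upperGauge_le (s := 0) (by simpa using hx))
    rw [map_neg] at h
    linarith

theorem exists_state_upperGauge_le (x : A.carrier) : ∃ μ : A.State, A.upperGauge x ≤ μ.1 x := by
  obtain ⟨φ, hφ, hφx⟩ := exists_linearMap_le_sublinear_apply_eq A.upperGauge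
    (fun _ hc x => upperGauge_smul hc x) upperGauge_add_le x
  exact ⟨⟨φ, isState_of_le_upperGauge φ hφ⟩, hφx.ge⟩

theorem onorm_le_of_forall_abs_apply_le {x : A.carrier} {c : ℝ}
    (h : ∀ μ : A.State, |μ.1 x| ≤ c) : A.onorm x ≤ c := by
  have le_smul_e_of_forall : ∀ z : A.carrier, (∀ μ : A.State, μ.1 z ≤ c) → z ≤ c • A.e := by
    intro z hz
    obtain ⟨μ, hμ⟩ := exists_state_upperGauge_le z
    exact (le_upperGauge_smul_e z).trans (A.smul_e_mono (hμ.trans (hz μ)))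
  have hhi := le_smul_e_of_forall x fun μ => (le_abs_self _).trans (h μ)
  have hlo := le_smul_e_of_forall (-x) fun μ => by
    rw [map_neg]
    exact neg_le.1 (abs_le.1 (h μ)).1
  exact csInf_le ((bddBelow_setOf_le_smul_e x).mono fun _ hr => hr.2) ⟨neg_le.1 hlo, hhi⟩

end Nonempty

theorem diam_eq_two_mul_radius (L : Seminorm ℝ A.carrier) : A.diam L = 2 * A.radius L :=
  (ENNReal.mul_div_cancel two_ne_zero ENNReal.ofNat_ne_top).symm

theorem ofReal_abs_sub_le_diam (L : Seminorm ℝ A.carrier) (μ ν : A.State) {x : A.carrier}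
    (hx : L x ≤ 1) : ENNReal.ofReal |μ.1 x - ν.1 x| ≤ A.diam L :=
  calc ENNReal.ofReal |μ.1 x - ν.1 x| ≤ A.rho L μ ν :=
        le_iSup (fun y : {y : A.carrier // L y ≤ 1} => ENNReal.ofReal |μ.1 y.1 - ν.1 y.1|) ⟨x, hx⟩
    _ ≤ A.diam L := le_iSup₂ (f := fun μ ν => A.rho L μ ν) μ ν

theorem State.abs_apply_sub_apply_le (L : Seminorm ℝ A.carrier) {r : ℝ} (hr0 : 0 ≤ r)
    (hr : A.radius L = ENNReal.ofReal r) (μ ν : A.State) (x : A.carrier) :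
    |μ.1 x - ν.1 x| ≤ 2 * r * L x := by
  have hdiam : A.diam L = ENNReal.ofReal (2 * r) := by
    rw [diam_eq_two_mul_radius, hr, ENNReal.ofReal_mul zero_le_two, ENNReal.ofReal_ofNat]
  refine (μ.1 - ν.1).abs_apply_le_mul_seminorm L (fun y hy => ?_) x
  have h := ofReal_abs_sub_le_diam L μ ν hy
  rwa [hdiam, ENNReal.ofReal_le_ofReal_iff (by positivity)] at h

end OrderUnitSpace

theorem onorm_le_onorm_image_add_general (A B : OrderUnitSpace)
    (L : Seminorm ℝ A.carrier)
    (r : ℝ) (hr0 : 0 ≤ r) (hr : A.radius L = ENNReal.ofReal r)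
    (f : A.carrier →ₗ[ℝ] B.carrier) (hf : A.IsMorphism B f)
    (hB : Nonempty B.State) (a : A.carrier) :
    A.onorm a ≤ B.onorm (f a) + 2 * r * L a := by
  obtain ⟨ν⟩ := hB
  let μ₀ := A.pullState B f hf ν
  have : Nonempty A.State := ⟨μ₀⟩
  refine OrderUnitSpace.onorm_le_of_forall_abs_apply_le fun μ => ?_
  have hfar := μ.abs_apply_sub_apply_le L hr0 hr μ₀ a
  have hnear : |μ₀.1 a| ≤ B.onorm (f a) := ν.abs_apply_le_onorm (f a)
  calc |μ.1 a| ≤ |μ₀.1 a| + |μ.1 a - μ₀.1 a| := by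
        linarith [abs_sub_abs_le_abs_sub (μ.1 a) (μ₀.1 a)]
    _ ≤ B.onorm (f a) + 2 * r * L a := add_le_add hnear hfar

/-- **Lemma 3.4 of Rieffel.** Let `(A, L)` be a compact quantum metric space of
radius `r` and let `π : A → B` be a morphism of order-unit spaces, where `B` has
at least one state. Then `‖a‖ ≤ ‖π(a)‖ + 2 r L(a)` for every `a ∈ A`. -/
theorem onorm_le_onorm_image_add (A B : OrderUnitSpace)
    (L : Seminorm ℝ A.carrier) (hL : A.IsLipNorm L)
    (r : ℝ) (hr0 : 0 ≤ r) (hr : A.radius L = ENNReal.ofReal r)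
    (f : A.carrier →ₗ[ℝ] B.carrier) (hf : A.IsMorphism B f)
    (hB : Nonempty B.State) (a : A.carrier) :
    A.onorm a ≤ B.onorm (f a) + 2 * r * L a :=
  onorm_le_onorm_image_add_general A B L r hr0 hr f hf hB a
end

section
/- Let X be a finite-dimensional real vector space with a linear functional η, let Θ be a compact metric space with metric d, let {‖·‖_θ}_{θ∈Θ} be a continuous field of base-norms on (X,η) with bases S_θ, and let ‖·‖_* be a norm on X such that ‖x‖_θ ≥ ‖x‖_* for all θ ∈ Θ and x ∈ X. Then the map θ ↦ S_θ is uniformly continuous for the Hausdorff distance dist_H^* induced by ‖·‖_*: for every ε > 0 there is δ > 0 such that d(θ,ψ) < δ implies dist_H^*(S_θ,S_ψ) < ε. -/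
/-!
If `N` is a base-norm and `M ≤ N` is a seminorm, a point `s` with `η s = 1` lies within
`M`-distance `N s - 1` of the base of `N`: write `(N s)⁻¹ • s` as a convex combination of a
point of the base and the negative of another one. So the Hausdorff distance between the bases
of `N` and `N'` is at most the supremum of `|N - N'|` on the `M`-unit ball. For the field
`θ ↦ ‖·‖_θ` this supremum is small uniformly in `θ`: by Banach–Steinhaus the family is jointly
continuous, and Heine–Cantor applies on `Θ` times the compact `‖·‖_*`-unit ball.
-/

open scoped ENNReal

/-- The base of a norm `N` relative to the linear functional `η`:
`S = {x | η x = 1 ∧ N x = 1}`. -/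
def baseOf {X : Type*} [AddCommGroup X] [Module ℝ X]
    (η : X →ₗ[ℝ] ℝ) (N : Seminorm ℝ X) : Set X :=
  {x : X | η x = 1 ∧ N x = 1}

/-- A base-norm on `(X, η)`: a norm whose closed unit ball is the convex hull of
`S ∪ (−S)`, where `S` is its base. -/
def IsBaseNorm {X : Type*} [AddCommGroup X] [Module ℝ X]
    (η : X →ₗ[ℝ] ℝ) (N : Seminorm ℝ X) : Prop :=
  (∀ x : X, N x = 0 → x = 0) ∧
    {x : X | N x ≤ 1} = convexHull ℝ (baseOf η N ∪ (fun x => -x) '' baseOf η N)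

/-- Hausdorff distance between two subsets of a vector space with respect to a
norm-like function `N`. -/
noncomputable def hausdorffDistOfNorm {X : Type*} [AddCommGroup X]
    (N : X → ℝ) (S T : Set X) : ℝ≥0∞ :=
  max (⨆ s ∈ S, ⨅ t ∈ T, ENNReal.ofReal (N (s - t)))
      (⨆ t ∈ T, ⨅ s ∈ S, ENNReal.ofReal (N (s - t)))

open Set

lemma hausdorffDistOfNorm_le_ofReal {X : Type*} [AddCommGroup X] {N : X → ℝ} {S T : Set X}
    {r : ℝ} (hST : ∀ s ∈ S, ∃ t ∈ T, N (s - t) ≤ r) (hTS : ∀ t ∈ T, ∃ s ∈ S, N (s - t) ≤ r) :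
    hausdorffDistOfNorm N S T ≤ ENNReal.ofReal r := by
  refine max_le (iSup₂_le fun s hs => ?_) (iSup₂_le fun t ht => ?_)
  · obtain ⟨t, ht, hst⟩ := hST s hs
    exact (iInf₂_le t ht).trans (ENNReal.ofReal_le_ofReal hst)
  · obtain ⟨s, hs, hst⟩ := hTS t ht
    exact (iInf₂_le s hs).trans (ENNReal.ofReal_le_ofReal hst)

section BaseNorm

variable {X : Type*} [AddCommGroup X] [Module ℝ X] {η : X →ₗ[ℝ] ℝ} {M N N' : Seminorm ℝ X}

/-- `η` is bounded by `1` on `S ∪ (-S)`, hence on its convex hull, the unit ball. -/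
lemma IsBaseNorm.abs_apply_le (h : IsBaseNorm η N) (x : X) : |η x| ≤ N x := by
  have hball : ∀ y, N y ≤ 1 → |η y| ≤ 1 := by
    intro y hy
    have hsub : baseOf η N ∪ (fun x => -x) '' baseOf η N ⊆ η ⁻¹' Icc (-1) 1 := by
      rintro z (hz | ⟨w, hw, rfl⟩)
      · simp [hz.1]
      · simp [hw.1]
    have hy' : y ∈ convexHull ℝ (baseOf η N ∪ (fun x => -x) '' baseOf η N) := h.2 ▸ hy
    exact abs_le.2 (convexHull_min hsub ((convex_Icc _ _).linear_preimage η) hy')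
  rcases (apply_nonneg N x).eq_or_lt with hx | hx
  · simp [h.1 x hx.symm]
  · have hunit : N ((N x)⁻¹ • x) ≤ 1 := by
      rw [map_smul_eq_mul, Real.norm_of_nonneg (inv_nonneg.2 hx.le), inv_mul_cancel₀ hx.ne']
    have := hball _ hunit
    rwa [map_smul, smul_eq_mul, abs_mul, abs_of_pos (inv_pos.2 hx), inv_mul_le_iff₀ hx,
      mul_one] at this

lemma IsBaseNorm.baseOf_nonempty (h : IsBaseNorm η N) : (baseOf η N).Nonempty := by
  have h0 : (0 : X) ∈ convexHull ℝ (baseOf η N ∪ (fun x => -x) '' baseOf η N) := by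
    rw [← h.2]; simp
  obtain ⟨x, hx | ⟨x, hx, -⟩⟩ := (convexHull_nonempty_iff.1 ⟨0, h0⟩)
  · exact ⟨x, hx⟩
  · exact ⟨x, hx⟩

lemma IsBaseNorm.convex_baseOf (h : IsBaseNorm η N) : Convex ℝ (baseOf η N) := by
  have heq : baseOf η N = η ⁻¹' {1} ∩ N.closedBall 0 1 := by
    ext x
    simp only [baseOf, mem_ofPred_eq, mem_inter_iff, mem_preimage, mem_singleton_iff,
      Seminorm.mem_closedBall, sub_zero]
    refine ⟨fun hx => ⟨hx.1, hx.2.le⟩, fun hx => ⟨hx.1, hx.2.antisymm ?_⟩⟩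
    simpa [hx.1] using h.abs_apply_le x
  rw [heq]
  exact ((convex_singleton 1).linear_preimage η).inter (N.convex_closedBall 0 1)

/-- Write `(N s)⁻¹ • s = μ u - ν w` with `u, w ∈ S`, `μ + ν = 1`; applying `η` gives
`μ - ν = (N s)⁻¹`, and then `s - u = ((N s - 1) / 2) • (u - w)`. -/
lemma IsBaseNorm.exists_mem_baseOf_sub_le (h : IsBaseNorm η N)
    (hMN : ∀ x, M x ≤ N x) {s : X} (hs : η s = 1) :
    ∃ u ∈ baseOf η N, M (s - u) ≤ N s - 1 := by
  set a := N s
  have ha : 1 ≤ a := by simpa [hs] using h.abs_apply_le s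
  have ha0 : a ≠ 0 := by positivity
  have hS := h.convex_baseOf
  have hmem : a⁻¹ • s ∈ convexJoin ℝ (baseOf η N) ((fun x => -x) '' baseOf η N) := by
    rw [← hS.convexHull_union (by simpa using hS.neg) h.baseOf_nonempty
      (h.baseOf_nonempty.image _), ← h.2]
    show N (a⁻¹ • s) ≤ 1
    rw [map_smul_eq_mul, Real.norm_of_nonneg (by positivity), inv_mul_cancel₀ ha0]
  obtain ⟨u, hu, -, ⟨w, hw, rfl⟩, μ, ν, -, -, hμν, hseg⟩ := mem_convexJoin.1 hmem
  have hμν' : μ - ν = a⁻¹ := by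
    have := congrArg η hseg
    simp only [map_add, map_smul, map_neg, hu.1, hw.1, hs, smul_eq_mul] at this
    linarith
  have hμ : a * μ = (a + 1) / 2 := by
    field_simp at hμν'
    linear_combination (a / 2) * hμν + hμν' / 2
  have hν : a * ν = (a - 1) / 2 := by linear_combination a * hμν - hμ
  have hsub : s - u = ((a - 1) / 2) • (u - w) := by
    have hs' : s = (a * μ) • u - (a * ν) • w := by
      calc s = a • (a⁻¹ • s) := by rw [smul_smul, mul_inv_cancel₀ ha0, one_smul]
        _ = (a * μ) • u - (a * ν) • w := by rw [← hseg]; module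
    rw [hs', hμ, hν]
    module
  refine ⟨u, hu, ?_⟩
  calc M (s - u) = (a - 1) / 2 * M (u - w) := by
        rw [hsub, map_smul_eq_mul, Real.norm_of_nonneg (by linarith)]
    _ ≤ (a - 1) / 2 * (N u + N w) := by
        have : 0 ≤ (a - 1) / 2 := by linarith
        gcongr
        exact (map_sub_le_add M u w).trans (add_le_add (hMN u) (hMN w))
    _ = a - 1 := by rw [hu.2, hw.2]; ring

lemma IsBaseNorm.exists_mem_baseOf_sub_le_of_abs_sub_le (hN' : IsBaseNorm η N')
    (hMN : ∀ x, M x ≤ N x) (hMN' : ∀ x, M x ≤ N' x) {κ : ℝ}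
    (hclose : ∀ x, M x ≤ 1 → |N x - N' x| ≤ κ) {s : X} (hs : s ∈ baseOf η N) :
    ∃ t ∈ baseOf η N', M (s - t) ≤ κ := by
  obtain ⟨t, ht, hst⟩ := hN'.exists_mem_baseOf_sub_le hMN' hs.1
  have hsκ := (abs_le.1 (hclose s ((hMN s).trans hs.2.le))).1
  exact ⟨t, ht, by linarith [hs.2]⟩

lemma IsBaseNorm.hausdorffDistOfNorm_baseOf_le (hN : IsBaseNorm η N) (hN' : IsBaseNorm η N')
    (hMN : ∀ x, M x ≤ N x) (hMN' : ∀ x, M x ≤ N' x) {κ : ℝ}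
    (hclose : ∀ x, M x ≤ 1 → |N x - N' x| ≤ κ) :
    hausdorffDistOfNorm (fun x => M x) (baseOf η N) (baseOf η N') ≤ ENNReal.ofReal κ := by
  refine hausdorffDistOfNorm_le_ofReal
    (fun s hs => hN'.exists_mem_baseOf_sub_le_of_abs_sub_le hMN hMN' hclose hs) fun t ht => ?_
  obtain ⟨s, hs, hts⟩ := hN.exists_mem_baseOf_sub_le_of_abs_sub_le hMN' hMN
    (fun x hx => abs_sub_comm (N x) (N' x) ▸ hclose x hx) ht
  exact ⟨s, hs, map_sub_rev M s t ▸ hts⟩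

end BaseNorm

lemma IsCompact.exists_pos_forall_dist_lt_abs_sub_lt {Θ E : Type*} [PseudoMetricSpace Θ]
    [CompactSpace Θ] [PseudoMetricSpace E] {K : Set E} (hK : IsCompact K) {f : Θ → E → ℝ}
    (hf : Continuous (Function.uncurry f)) {κ : ℝ} (hκ : 0 < κ) :
    ∃ δ > 0, ∀ θ ψ, dist θ ψ < δ → ∀ x ∈ K, |f θ x - f ψ x| < κ := by
  obtain ⟨δ, hδ, hfδ⟩ := Metric.uniformContinuousOn_iff.1
    ((isCompact_univ.prod hK).uniformContinuousOn_of_continuous hf.continuousOn) κ hκ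
  refine ⟨δ, hδ, fun θ ψ hθψ x hx => ?_⟩
  have hdist : dist (θ, x) (ψ, x) < δ := by simpa [Prod.dist_eq] using hθψ
  exact hfδ (θ, x) ⟨mem_univ θ, hx⟩ (ψ, x) ⟨mem_univ ψ, hx⟩ hdist

section FiniteDimensional

variable {Θ E : Type*} [TopologicalSpace Θ] [NormedAddCommGroup E] [NormedSpace ℝ E]
  [FiniteDimensional ℝ E]

lemma Seminorm.continuous_of_finiteDimensional (p : Seminorm ℝ E) : Continuous p :=
  p.convexOn.locallyLipschitz.continuous

/-- By Banach–Steinhaus, `⨆ θ, q θ` is a continuous seminorm. -/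
lemma Seminorm.exists_forall_le_mul_norm_of_compactSpace [CompactSpace Θ] (q : Θ → Seminorm ℝ E)
    (hq : ∀ x, Continuous fun θ => q θ x) : ∃ C, ∀ θ x, q θ x ≤ C * ‖x‖ := by
  have hbdd : BddAbove (range q) :=
    Seminorm.bddAbove_range_iff.2 fun x => (isCompact_range (hq x)).bddAbove
  obtain ⟨C, -, hC⟩ := (⨆ θ, q θ).bound_of_continuous_normedSpace <| by
    rw [Seminorm.coe_iSup_eq hbdd]
    exact Seminorm.continuous_iSup q (fun θ => (q θ).continuous_of_finiteDimensional) hbdd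
  exact ⟨C, fun θ x => (le_ciSup hbdd θ x).trans (hC x)⟩

lemma Seminorm.continuous_uncurry_of_compactSpace [CompactSpace Θ] (q : Θ → Seminorm ℝ E)
    (hq : ∀ x, Continuous fun θ => q θ x) : Continuous fun p : Θ × E => q p.1 p.2 := by
  obtain ⟨C, hC⟩ := exists_forall_le_mul_norm_of_compactSpace q hq
  refine continuous_iff_continuousAt.2 fun ⟨θ, x⟩ => tendsto_iff_norm_sub_tendsto_zero.2 ?_
  have hbound : ∀ p : Θ × E, ‖q p.1 p.2 - q θ x‖ ≤ C * ‖p.2 - x‖ + |q p.1 x - q θ x| :=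
    fun ⟨ψ, y⟩ => calc
      |q ψ y - q θ x| ≤ |q ψ y - q ψ x| + |q ψ x - q θ x| := abs_sub_le _ _ _
      _ ≤ C * ‖y - x‖ + |q ψ x - q θ x| := by
        gcongr
        exact (abs_sub_map_le_sub (q ψ) y x).trans (hC ψ (y - x))
  refine squeeze_zero (fun _ => norm_nonneg _) hbound ?_
  have hcont : Continuous fun p : Θ × E => C * ‖p.2 - x‖ + |q p.1 x - q θ x| := by fun_prop
  simpa using hcont.tendsto (θ, x)

end FiniteDimensional

lemma Seminorm.exists_pos_forall_dist_lt_abs_sub_lt {X Θ : Type*} [AddCommGroup X] [Module ℝ X]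
    [FiniteDimensional ℝ X] [PseudoMetricSpace Θ] [CompactSpace Θ] (q : Θ → Seminorm ℝ X)
    (hq : ∀ x, Continuous fun θ => q θ x) (p : Seminorm ℝ X) (hp : ∀ x, p x = 0 → x = 0)
    {κ : ℝ} (hκ : 0 < κ) :
    ∃ δ > 0, ∀ θ ψ, dist θ ψ < δ → ∀ x, p x ≤ 1 → |q θ x - q ψ x| < κ := by
  -- Normed by `p`, the space `X` is finite-dimensional, so its closed unit ball is compact.
  let _ : NormedAddCommGroup X :=
    AddGroupNorm.toNormedAddCommGroup { p.toAddGroupSeminorm with eq_zero_of_map_eq_zero' := hp }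
  let _ : NormedSpace ℝ X := ⟨fun c x => (map_smul_eq_mul p c x).le⟩
  obtain ⟨δ, hδ, hclose⟩ := (isCompact_closedBall (0 : X) 1).exists_pos_forall_dist_lt_abs_sub_lt
    (f := fun θ x => q θ x) (Seminorm.continuous_uncurry_of_compactSpace q hq) hκ
  exact ⟨δ, hδ, fun θ ψ hθψ x hx => hclose θ ψ hθψ x (mem_closedBall_zero_iff.2 hx)⟩

/-- **Theorem 10.6 of Rieffel.** Let `X` be a finite-dimensional real vector space
with a linear functional `η`, let `Θ` be a compact metric space, let
`{‖·‖_θ}_{θ ∈ Θ}` be a continuous field of base-norms on `(X, η)` with bases `S_θ`,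
and let `‖·‖_*` be a norm on `X` with `‖x‖_θ ≥ ‖x‖_*` for all `θ` and `x`. Then
`θ ↦ S_θ` is uniformly continuous for the Hausdorff distance induced by `‖·‖_*`. -/
theorem base_field_uniformly_continuous {X : Type*} [AddCommGroup X] [Module ℝ X]
    [FiniteDimensional ℝ X]
    (η : X →ₗ[ℝ] ℝ)
    {Θ : Type*} [MetricSpace Θ] [CompactSpace Θ]
    (Ns : Θ → Seminorm ℝ X) (hbase : ∀ θ : Θ, IsBaseNorm η (Ns θ))
    (hcont : ∀ x : X, Continuous fun θ : Θ => Ns θ x)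
    (Nstar : Seminorm ℝ X) (hstar : ∀ x : X, Nstar x = 0 → x = 0)
    (hle : ∀ (θ : Θ) (x : X), Nstar x ≤ Ns θ x) :
    ∀ ε : ℝ, 0 < ε → ∃ δ : ℝ, 0 < δ ∧ ∀ θ ψ : Θ, dist θ ψ < δ →
      hausdorffDistOfNorm (fun x => Nstar x) (baseOf η (Ns θ)) (baseOf η (Ns ψ)) <
        ENNReal.ofReal ε := by
  intro ε hε
  obtain ⟨δ, hδ, hclose⟩ :=
    Seminorm.exists_pos_forall_dist_lt_abs_sub_lt Ns hcont Nstar hstar (half_pos hε)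
  refine ⟨δ, hδ, fun θ ψ hθψ => ?_⟩
  calc hausdorffDistOfNorm (fun x => Nstar x) (baseOf η (Ns θ)) (baseOf η (Ns ψ))
      ≤ ENNReal.ofReal (ε / 2) :=
        (hbase θ).hausdorffDistOfNorm_baseOf_le (hbase ψ) (hle θ) (hle ψ)
          fun x hx => (hclose θ ψ hθψ x hx).le
    _ < ENNReal.ofReal ε := (ENNReal.ofReal_lt_ofReal_iff hε).2 (half_lt_self hε)
end

section
/- Key Lemma on base-norms: let X be a nonzero finite-dimensional real vector space with a linear functional η, let ‖·‖₁ and ‖·‖₂ be base-norms on (X,η) with bases S₁ and S₂, and let ‖·‖_* be a norm on X with ‖x‖_* ≤ ‖x‖₁ and ‖x‖_* ≤ ‖x‖₂ for all x ∈ X. Let 0 < ε < 2 and suppose |‖x‖₁ − ‖x‖₂| < (ε/4)·‖x‖_* for all x ≠ 0. Then dist_H^*(S₁,S₂) < ε. -/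
open scoped ENNReal

theorem eta_abs_le {X : Type*} [AddCommGroup X] [Module ℝ X]
    (η : X →ₗ[ℝ] ℝ) (N : Seminorm ℝ X) (h : IsBaseNorm η N) (x : X) :
    |η x| ≤ N x := by
  rcases eq_or_ne x 0 with rfl | hx
  · simp
  · have hm : 0 < N x := (apply_nonneg N x).lt_of_ne' (fun h0 => hx (h.1 x h0))
    have hy : ((N x)⁻¹ • x) ∈ {y : X | N y ≤ 1} := by
      show N _ ≤ 1
      rw [map_smul_eq_mul, Real.norm_eq_abs, abs_inv, abs_of_pos hm,
        inv_mul_cancel₀ hm.ne']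
    rw [h.2] at hy
    have hsub : convexHull ℝ (baseOf η N ∪ (fun x => -x) '' baseOf η N) ⊆
        {y : X | |η y| ≤ 1} := by
      apply convexHull_min
      · rintro y (hy' | ⟨z, hz, rfl⟩)
        · simp [Set.mem_setOf_eq, hy'.1]
        · simp [Set.mem_setOf_eq, hz.1]
      · have hC : {y : X | |η y| ≤ 1} = η ⁻¹' (Set.Icc (-1:ℝ) 1) := by
          ext y; simp [abs_le]
        rw [hC]
        exact (convex_Icc _ _).linear_preimage η
    have := hsub hy
    simp only [Set.mem_setOf_eq, map_smul, smul_eq_mul, abs_mul, abs_inv,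
      abs_of_pos hm] at this
    rw [inv_mul_le_iff₀ hm] at this
    linarith

theorem base_nonempty {X : Type*} [AddCommGroup X] [Module ℝ X]
    (η : X →ₗ[ℝ] ℝ) (N : Seminorm ℝ X) (h : IsBaseNorm η N) :
    (baseOf η N).Nonempty := by
  have h0 : (0:X) ∈ {x : X | N x ≤ 1} := by simp
  rw [h.2] at h0
  have hne : (baseOf η N ∪ (fun x : X => -x) '' baseOf η N).Nonempty :=
    convexHull_nonempty_iff.mp ⟨0, h0⟩
  rcases hne with ⟨y, hy | ⟨z, hz, _⟩⟩
  · exact ⟨y, hy⟩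
  · exact ⟨z, hz⟩

theorem base_approx {X : Type*} [AddCommGroup X] [Module ℝ X]
    (η : X →ₗ[ℝ] ℝ) (N : Seminorm ℝ X) (h : IsBaseNorm η N)
    (x : X) (hx : η x = 1) :
    ∃ u ∈ baseOf η N, N (x - u) ≤ N x - 1 := by
  have hm1 : 1 ≤ N x := by
    have := eta_abs_le η N h x; rw [hx] at this; simpa using this
  have hm0 : 0 < N x := lt_of_lt_of_le one_pos hm1
  set m := N x with hmdef
  have hSconv : Convex ℝ (baseOf η N) := by
    intro u hu v hv a b ha hb hab
    have hη : η (a • u + b • v) = 1 := by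
      rw [map_add, map_smul, map_smul, hu.1, hv.1, smul_eq_mul, smul_eq_mul]
      linarith
    refine ⟨hη, le_antisymm ?_ ?_⟩
    · calc N (a • u + b • v) ≤ N (a • u) + N (b • v) := map_add_le_add N _ _
        _ = a * 1 + b * 1 := by
            rw [map_smul_eq_mul, map_smul_eq_mul, Real.norm_eq_abs,
              Real.norm_eq_abs, abs_of_nonneg ha, abs_of_nonneg hb, hu.2, hv.2]
        _ = 1 := by linarith
    · have := eta_abs_le η N h (a • u + b • v)
      rw [hη] at this; simpa using this
  have hnegconv : Convex ℝ ((fun x : X => -x) '' baseOf η N) := by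
    have : (fun x : X => -x) '' baseOf η N = -(baseOf η N) := by
      ext y; simp [Set.mem_neg, neg_eq_iff_eq_neg]
    rw [this]
    exact hSconv.neg
  have hy : (m⁻¹ • x) ∈ {y : X | N y ≤ 1} := by
    show N _ ≤ 1
    rw [map_smul_eq_mul, Real.norm_eq_abs, abs_inv, abs_of_pos hm0,
      inv_mul_cancel₀ hm0.ne']
  rw [h.2, convexHull_union (base_nonempty η N h)
    ((base_nonempty η N h).image _), hSconv.convexHull_eq,
    hnegconv.convexHull_eq] at hy
  rw [mem_convexJoin] at hy
  obtain ⟨u, hu, w, ⟨v, hv, rfl⟩, huw⟩ := hy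
  obtain ⟨a, b, ha, hb, hab, hy_eq⟩ := huw
  -- η applied
  have hηy : a - b = m⁻¹ := by
    have := congrArg η hy_eq
    simp only [map_add, map_smul, map_neg, smul_eq_mul, hu.1, hv.1, hx,
      mul_one, mul_neg] at this
    linarith [this]
  have hma : m * a = (m + 1) / 2 := by
    have h1 : m * (a - b) = 1 := by rw [hηy]; exact mul_inv_cancel₀ hm0.ne'
    have h2 : m * (a + b) = m := by rw [hab, mul_one]
    nlinarith [h1, h2]
  have hmb : m * b = (m - 1) / 2 := by
    have h1 : m * (a - b) = 1 := by rw [hηy]; exact mul_inv_cancel₀ hm0.ne'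
    have h2 : m * (a + b) = m := by rw [hab, mul_one]
    nlinarith [h1, h2]
  set c : ℝ := (m - 1) / 2 with hcdef
  have hc0 : 0 ≤ c := by rw [hcdef]; linarith
  have hx_eq : x = (m * a) • u + (m * b) • (-v) := by
    have : m • (a • u + b • (-v)) = m • (m⁻¹ • x) := by rw [hy_eq]
    rw [smul_smul, mul_inv_cancel₀ hm0.ne', one_smul, smul_add, smul_smul,
      smul_smul] at this
    exact this.symm
  rw [hma, hmb] at hx_eq
  have key : x - u = c • (u - v) := by
    rw [hx_eq, hcdef]
    module
  refine ⟨u, hu, ?_⟩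
  have hsub : N (u - v) ≤ 2 := by
    calc N (u - v) ≤ N u + N v := map_sub_le_add N u v
      _ = 2 := by rw [hu.2, hv.2]; norm_num
  calc N (x - u) = |c| * N (u - v) := by rw [key, map_smul_eq_mul, Real.norm_eq_abs]
    _ ≤ c * 2 := by
        rw [abs_of_nonneg hc0]
        exact mul_le_mul_of_nonneg_left hsub hc0
    _ = m - 1 := by rw [hcdef]; ring

/-- **Key Lemma 10.7 of Rieffel.** Let `X` be a nonzero finite-dimensional real
vector space with linear functional `η`, let `N₁`, `N₂` be base-norms on `(X, η)`
with bases `S₁`, `S₂`, and let `N_*` be a norm with `N_* ≤ N₁` and `N_* ≤ N₂`.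
If `0 < ε < 2` and `|N₁ x − N₂ x| < (ε/4) N_* x` for all `x ≠ 0`, then
`dist_H^*(S₁, S₂) < ε`. -/
theorem base_norm_key_lemma {X : Type*} [AddCommGroup X] [Module ℝ X]
    [FiniteDimensional ℝ X] [Nontrivial X]
    (η : X →ₗ[ℝ] ℝ) (N₁ N₂ : Seminorm ℝ X)
    (h₁ : IsBaseNorm η N₁) (h₂ : IsBaseNorm η N₂)
    (Nstar : Seminorm ℝ X) (hstar : ∀ x : X, Nstar x = 0 → x = 0)
    (hle₁ : ∀ x : X, Nstar x ≤ N₁ x) (hle₂ : ∀ x : X, Nstar x ≤ N₂ x)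
    (ε : ℝ) (hε0 : 0 < ε) (hε2 : ε < 2)
    (hclose : ∀ x : X, x ≠ 0 → |N₁ x - N₂ x| < ε / 4 * Nstar x) :
    hausdorffDistOfNorm (fun x => Nstar x) (baseOf η N₁) (baseOf η N₂) <
      ENNReal.ofReal ε := by
  have key : ∀ (Na Nb : Seminorm ℝ X), IsBaseNorm η Nb →
      (∀ x, Nstar x ≤ Na x) → (∀ x, Nstar x ≤ Nb x) →
      (∀ x : X, x ≠ 0 → |Na x - Nb x| < ε / 4 * Nstar x) →
      ∀ s ∈ baseOf η Na, ∃ u ∈ baseOf η Nb, Nstar (s - u) ≤ ε / 4 := by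
    intro Na Nb hb hlea hleb hcl s hs
    have hs0 : s ≠ 0 := by
      intro h0
      have := hs.1
      rw [h0, map_zero] at this
      norm_num at this
    have hb_s : Nb s ≤ 1 + ε / 4 := by
      have h1 := abs_lt.mp (hcl s hs0)
      have h2 : Nstar s ≤ 1 := (hlea s).trans_eq hs.2
      have h3 : Na s = 1 := hs.2
      nlinarith [apply_nonneg Nstar s]
    obtain ⟨u, hu, hNu⟩ := base_approx η Nb hb s hs.1
    have := hleb (s - u)
    exact ⟨u, hu, by linarith⟩
  have hclose' : ∀ x : X, x ≠ 0 → |N₂ x - N₁ x| < ε / 4 * Nstar x := by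
    intro x hx; rw [abs_sub_comm]; exact hclose x hx
  have hA : (⨆ s ∈ baseOf η N₁, ⨅ t ∈ baseOf η N₂,
      ENNReal.ofReal (Nstar (s - t))) ≤ ENNReal.ofReal (ε / 4) := by
    refine iSup₂_le fun s hs => ?_
    obtain ⟨u, hu, hle⟩ := key N₁ N₂ h₂ hle₁ hle₂ hclose s hs
    exact le_trans (iInf₂_le u hu) (ENNReal.ofReal_le_ofReal hle)
  have hB : (⨆ t ∈ baseOf η N₂, ⨅ s ∈ baseOf η N₁,
      ENNReal.ofReal (Nstar (s - t))) ≤ ENNReal.ofReal (ε / 4) := by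
    refine iSup₂_le fun t ht => ?_
    obtain ⟨u, hu, hle⟩ := key N₂ N₁ h₁ hle₂ hle₁ hclose' t ht
    have : Nstar (u - t) ≤ ε / 4 := by rwa [map_sub_rev] at hle
    exact le_trans (iInf₂_le u hu) (ENNReal.ofReal_le_ofReal this)
  have hlt : ENNReal.ofReal (ε / 4) < ENNReal.ofReal ε :=
    (ENNReal.ofReal_lt_ofReal_iff hε0).mpr (by linarith)
  unfold hausdorffDistOfNorm
  exact max_lt (hA.trans_lt hlt) (hB.trans_lt hlt)
end

section
/- Let H be a real Hilbert space and fix z ∈ H. For each nonempty compact convex subset C of H let Ω_C denote the (unique) point of C closest to z. Then the map C ↦ Ω_C is continuous for the Hausdorff metric: for every nonempty compact convex subset D of H and every ε > 0 there is δ > 0 such that every nonempty compact convex subset C of H with dist_H(C,D) < δ satisfies ‖Ω_C − Ω_D‖ < ε. -/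
/-!
If `q` is the point of the convex set `D` closest to `z`, the angle at `q` between `z` and any
`d ∈ D` is obtuse, so `‖d - q‖² + ‖q - z‖² ≤ ‖d - z‖²`: a point of `D` that is nearly as close
to `z` as `q` is close to `q`. When `dist_H(C, D) < δ`, the closest point `p` of `C` lies within
`δ` of some `d ∈ D`, and comparing with a point of `C` within `δ` of `q` shows
`‖d - z‖ ≤ ‖q - z‖ + 2δ`. Hence `‖p - q‖ < δ + 2 √(δ (‖q - z‖ + δ))`, which tends to `0`
with `δ` because `‖q - z‖` is bounded on the compact set `D`.
-/

open Filter Topology Metric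

section ClosestPoint

variable {H : Type*} [NormedAddCommGroup H] [InnerProductSpace ℝ H] {K C D : Set H} {z p q d : H}

theorem IsMinOn.sq_norm_sub_add_sq_norm_sub_le (hK : Convex ℝ K)
    (hmin : IsMinOn (‖· - z‖) K q) (hq : q ∈ K) (hd : d ∈ K) :
    ‖d - q‖ ^ 2 + ‖q - z‖ ^ 2 ≤ ‖d - z‖ ^ 2 := by
  have : Nonempty K := ⟨⟨q, hq⟩⟩
  have hinf : ‖z - q‖ = ⨅ w : K, ‖z - w‖ := by
    have hbdd : BddBelow (Set.range fun w : K => ‖z - w‖) :=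
      ⟨0, by rintro _ ⟨w, rfl⟩; positivity⟩
    refine le_antisymm (le_ciInf fun w => ?_) (ciInf_le hbdd ⟨q, hq⟩)
    simpa only [norm_sub_rev z] using isMinOn_iff.mp hmin w w.2
  have hobtuse : inner ℝ (z - q) (d - q) ≤ 0 :=
    (norm_eq_iInf_iff_real_inner_le_zero hK hq).mp hinf d hd
  have hexpand : ‖d - z‖ ^ 2 = ‖d - q‖ ^ 2 - 2 * inner ℝ (d - q) (z - q) + ‖z - q‖ ^ 2 := by
    rw [← norm_sub_sq_real, sub_sub_sub_cancel_right]
  rw [hexpand, real_inner_comm, norm_sub_rev z q]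
  linarith

theorem IsMinOn.sq_norm_sub_le_of_norm_sub_le (hK : Convex ℝ K)
    (hmin : IsMinOn (‖· - z‖) K q) (hq : q ∈ K) (hd : d ∈ K) {η : ℝ}
    (hdz : ‖d - z‖ ≤ ‖q - z‖ + η) :
    ‖d - q‖ ^ 2 ≤ η * (2 * ‖q - z‖ + η) := by
  have := hmin.sq_norm_sub_add_sq_norm_sub_le hK hq hd
  nlinarith [norm_nonneg (d - z), norm_nonneg (q - z)]

theorem IsMinOn.norm_sub_lt_of_hausdorffDist_lt (hD : Convex ℝ D)
    (hfin : hausdorffEDist C D ≠ ⊤) {δ : ℝ} (hCD : hausdorffDist C D < δ)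
    (hp : p ∈ C) (hq : q ∈ D) (hpmin : IsMinOn (‖· - z‖) C p) (hqmin : IsMinOn (‖· - z‖) D q) :
    ‖p - q‖ < δ + 2 * √(δ * (‖q - z‖ + δ)) := by
  obtain ⟨d, hd, hpd⟩ := exists_dist_lt_of_hausdorffDist_lt hp hCD hfin
  obtain ⟨c, hc, hqc⟩ := exists_dist_lt_of_hausdorffDist_lt' hq hCD hfin
  rw [dist_eq_norm] at hpd hqc
  have hδ : 0 ≤ δ := hausdorffDist_nonneg.trans hCD.le
  have hpz : ‖p - z‖ ≤ ‖q - z‖ + δ := calc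
    ‖p - z‖ ≤ ‖c - z‖ := hpmin hc
    _ ≤ ‖c - q‖ + ‖q - z‖ := norm_sub_le_norm_sub_add_norm_sub c q z
    _ ≤ ‖q - z‖ + δ := by linarith
  have hdz : ‖d - z‖ ≤ ‖q - z‖ + 2 * δ := calc
    ‖d - z‖ ≤ ‖d - p‖ + ‖p - z‖ := norm_sub_le_norm_sub_add_norm_sub d p z
    _ ≤ ‖q - z‖ + 2 * δ := by rw [norm_sub_rev]; linarith
  have hdq : ‖d - q‖ ≤ 2 * √(δ * (‖q - z‖ + δ)) := by
    rw [← Real.sqrt_sq (norm_nonneg _), ← Real.sqrt_sq zero_le_two, ← Real.sqrt_mul' _ (by positivity)]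
    refine Real.sqrt_le_sqrt ?_
    linarith [hqmin.sq_norm_sub_le_of_norm_sub_le hD hq hd hdz]
  calc ‖p - q‖ ≤ ‖p - d‖ + ‖d - q‖ := norm_sub_le_norm_sub_add_norm_sub p d q
    _ < δ + 2 * √(δ * (‖q - z‖ + δ)) := by linarith

end ClosestPoint

theorem exists_pos_add_two_mul_sqrt_lt (r : ℝ) {ε : ℝ} (hε : 0 < ε) :
    ∃ δ > 0, δ + 2 * √(δ * (r + δ)) < ε := by
  have hlim : Tendsto (fun δ : ℝ => δ + 2 * √(δ * (r + δ))) (𝓝[>] 0) (𝓝 0) := by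
    have hcont : Continuous fun δ : ℝ => δ + 2 * √(δ * (r + δ)) := by fun_prop
    simpa using hcont.tendsto 0 |>.mono_left nhdsWithin_le_nhds
  exact ((hlim.eventually (gt_mem_nhds hε)).and self_mem_nhdsWithin).exists.imp
    fun δ h => ⟨h.2, h.1⟩

theorem closest_point_continuous_hausdorff_general {H : Type*}
    [NormedAddCommGroup H] [InnerProductSpace ℝ H]
    (z : H) (D : Set H) (hDc : IsCompact D) (hDv : Convex ℝ D)
    (ε : ℝ) (hε : 0 < ε) :
    ∃ δ : ℝ, 0 < δ ∧
      ∀ C : Set H, C.Nonempty → IsCompact C → Convex ℝ C →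
        Metric.hausdorffDist C D < δ →
        ∀ p q : H, p ∈ C → q ∈ D →
          (∀ c ∈ C, ‖p - z‖ ≤ ‖c - z‖) → (∀ d ∈ D, ‖q - z‖ ≤ ‖d - z‖) →
          ‖p - q‖ < ε := by
  obtain ⟨r, hr⟩ := hDc.isBounded.subset_closedBall z
  obtain ⟨δ, hδ, hδε⟩ := exists_pos_add_two_mul_sqrt_lt r hε
  refine ⟨δ, hδ, fun C hCne hCc _ hCD p q hp hq hpmin hqmin => ?_⟩
  have hfin : hausdorffEDist C D ≠ ⊤ :=
    hausdorffEDist_ne_top_of_nonempty_of_bounded hCne ⟨q, hq⟩ hCc.isBounded hDc.isBounded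
  have hqr : ‖q - z‖ ≤ r := by simpa [dist_eq_norm] using hr hq
  calc ‖p - q‖ < δ + 2 * √(δ * (‖q - z‖ + δ)) :=
        IsMinOn.norm_sub_lt_of_hausdorffDist_lt hDv hfin hCD hp hq hpmin hqmin
    _ ≤ δ + 2 * √(δ * (r + δ)) := by gcongr
    _ < ε := hδε

/-- **Proposition 10.10 of Rieffel.** Let `H` be a real Hilbert space and fix `z ∈ H`.
For each nonempty compact convex subset `C` of `H` let `Ω_C` denote the point of `C`
closest to `z`. Then `C ↦ Ω_C` is continuous for the Hausdorff metric: for every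
nonempty compact convex `D ⊆ H` and every `ε > 0` there is `δ > 0` such that for
every nonempty compact convex `C ⊆ H` with `dist_H(C, D) < δ`, the closest points
satisfy `‖Ω_C − Ω_D‖ < ε`. -/
theorem closest_point_continuous_hausdorff {H : Type*}
    [NormedAddCommGroup H] [InnerProductSpace ℝ H]
    (z : H) (D : Set H) (hDne : D.Nonempty) (hDc : IsCompact D) (hDv : Convex ℝ D)
    (ε : ℝ) (hε : 0 < ε) :
    ∃ δ : ℝ, 0 < δ ∧
      ∀ C : Set H, C.Nonempty → IsCompact C → Convex ℝ C →
        Metric.hausdorffDist C D < δ →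
        ∀ p q : H, p ∈ C → q ∈ D →
          (∀ c ∈ C, ‖p - z‖ ≤ ‖c - z‖) → (∀ d ∈ D, ‖q - z‖ ≤ ‖d - z‖) →
          ‖p - q‖ < ε :=
  closest_point_continuous_hausdorff_general z D hDc hDv ε hε
end
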